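/- arXiv:1608.03352 — 2 statements merged into one kernel-verified Lean document; each statement's English description precedes it below -/
import Mathlib

section
/- Under the hypotheses of the unbiasedness Proposition (an SMC particle system with M particles, strictly positive incremental weights α_n, multinomial resampling at fixed times τ_1 < ⋯ < τ_r with resampling probabilities V_{τ_s}^{(j)} proportional to the accumulated incremental weights since the previous resampling, conditionally independent propagation according to the proposal kernels between resampling times, and ψ(X_{1:N}) L_N(X_{1:N}) integrable), the random variable ψ̃_OR = (1/M) ∑_{i=1}^{M} L_N(X_{1:N}^{(i)}) ψ(X_{1:N}^{(i)}) H_{τ_r}^{(i)} satisfies E[ψ̃_OR] = ψ_N, where ψ_N = E_{π_N}[ψ(X_{1:N})] and H_{τ_r}^{(i)} = (∏_{t=1}^{r} v̄_{τ_t}) / ∏_{n=1}^{τ_r} α_n(X̄_{1:n}^{(i)}). -/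
open MeasureTheory ProbabilityTheory
open scoped ENNReal

namespace SMCUnbiasedAux

lemma iSup_min_natCast (a : ℝ≥0∞) : ⨆ K : ℕ, min a (K : ℝ≥0∞) = a := by
  refine le_antisymm (iSup_le fun K => min_le_left _ _) ?_
  rcases eq_or_ne a ⊤ with ha | ha
  · have : ∀ K : ℕ, min a (K : ℝ≥0∞) = (K : ℝ≥0∞) := fun K => by
      simp [ha]
    simp only [this]
    rw [ENNReal.iSup_natCast, ha]
  · obtain ⟨K, hK⟩ := ENNReal.exists_nat_gt ha
    calc a = min a (K : ℝ≥0∞) := (min_eq_left hK.le).symm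
    _ ≤ ⨆ K : ℕ, min a (K : ℝ≥0∞) := le_iSup (fun K : ℕ => min a (K : ℝ≥0∞)) K

lemma ofReal_trunc_toReal (a : ℝ≥0∞) (K : ℕ) :
    ENNReal.ofReal ((min a (K : ℝ≥0∞)).toReal) = min a (K : ℝ≥0∞) :=
  ENNReal.ofReal_toReal (by
    exact ne_top_of_le_ne_top (ENNReal.natCast_ne_top K) (min_le_right _ _))

lemma trunc_toReal_nonneg (a : ℝ≥0∞) (K : ℕ) : (0:ℝ) ≤ (min a (K : ℝ≥0∞)).toReal :=
  ENNReal.toReal_nonneg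

lemma trunc_toReal_le (a : ℝ≥0∞) (K : ℕ) : |(min a (K : ℝ≥0∞)).toReal| ≤ (K : ℝ) := by
  rw [abs_of_nonneg ENNReal.toReal_nonneg]
  calc (min a (K : ℝ≥0∞)).toReal ≤ ((K : ℝ≥0∞)).toReal :=
        ENNReal.toReal_mono (ENNReal.natCast_ne_top K) (min_le_right _ _)
  _ = (K : ℝ) := by simp

/-- The main transfer principle: from a conditional-expectation identity between an
integrable nonnegative `F` and an `m`-measurable `G`, deduce the corresponding
weighted `lintegral` identity for arbitrary `m`-measurable `ℝ≥0∞` weights. -/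
lemma weighted_lintegral_of_condexp {Ω : Type*} {mΩ : MeasurableSpace Ω}
    (P : Measure Ω) [IsProbabilityMeasure P]
    {m : MeasurableSpace Ω} (hm : m ≤ mΩ)
    {F G : Ω → ℝ} (hFint : Integrable F P) (hFnn : 0 ≤ᵐ[P] F)
    (hGmeas : Measurable[m] G)
    (hFG : P[F | m] =ᵐ[P] G)
    {w : Ω → ℝ≥0∞} (hw : Measurable[m] w) :
    ∫⁻ ω, w ω * ENNReal.ofReal (F ω) ∂P = ∫⁻ ω, w ω * ENNReal.ofReal (G ω) ∂P := by
  have hGmΩ : Measurable[mΩ] G := fun _ ht => hm _ (hGmeas ht)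
  have hGint : Integrable G P := (integrable_condExp).congr hFG
  have hGnn : 0 ≤ᵐ[P] G := by
    filter_upwards [hFG, condExp_nonneg (m := m) hFnn] with ω h1 h2
    rw [← h1]; exact h2
  have key : ∀ A : Set Ω, MeasurableSet[m] A →
      ∫⁻ ω in A, ENNReal.ofReal (F ω) ∂P = ∫⁻ ω in A, ENNReal.ofReal (G ω) ∂P := by
    intro A hA
    rw [← ofReal_integral_eq_lintegral_ofReal (hFint.restrict) (ae_restrict_of_ae hFnn),
      ← ofReal_integral_eq_lintegral_ofReal (hGint.restrict) (ae_restrict_of_ae hGnn)]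
    congr 1
    rw [← setIntegral_condExp hm hFint hA]
    exact integral_congr_ae (ae_restrict_of_ae hFG)
  set μ₁ := P.withDensity (fun ω => ENNReal.ofReal (F ω)) with hμ₁
  set μ₂ := P.withDensity (fun ω => ENNReal.ofReal (G ω)) with hμ₂
  have hFaem : AEMeasurable (fun ω => ENNReal.ofReal (F ω)) P :=
    (ENNReal.measurable_ofReal.comp_aemeasurable hFint.1.aemeasurable)
  have htrim : μ₁.trim hm = μ₂.trim hm := by
    refine Measure.ext fun A hA => ?_
    rw [trim_measurableSet_eq hm hA, trim_measurableSet_eq hm hA,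
      withDensity_apply _ (hm A hA), withDensity_apply _ (hm A hA)]
    exact key A hA
  have hwmΩ : Measurable[mΩ] w := fun _ ht => hm _ (hw ht)
  calc ∫⁻ ω, w ω * ENNReal.ofReal (F ω) ∂P
      = ∫⁻ ω, ((fun ω => ENNReal.ofReal (F ω)) * w) ω ∂P := by
        congr 1; ext ω; exact mul_comm _ _
    _ = ∫⁻ ω, w ω ∂μ₁ :=
        (lintegral_withDensity_eq_lintegral_mul₀ hFaem hwmΩ.aemeasurable).symm
    _ = ∫⁻ ω, w ω ∂(μ₁.trim hm) := (lintegral_trim hm hw).symm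
    _ = ∫⁻ ω, w ω ∂(μ₂.trim hm) := by rw [htrim]
    _ = ∫⁻ ω, w ω ∂μ₂ := lintegral_trim hm hw
    _ = ∫⁻ ω, ((fun ω => ENNReal.ofReal (G ω)) * w) ω ∂P :=
        lintegral_withDensity_eq_lintegral_mul₀
          (ENNReal.measurable_ofReal.comp hGmΩ).aemeasurable hwmΩ.aemeasurable
    _ = ∫⁻ ω, w ω * ENNReal.ofReal (G ω) ∂P := by
        congr 1; ext ω; exact mul_comm _ _

end SMCUnbiasedAux




/-- Unbiasedness of `ψ̃_OR`: under the hypotheses of the Proposition in the appendix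
(SMC with multinomial resampling and conditionally independent propagation according to
the proposal kernels), `E[ψ̃_OR] = ψ_N`. -/
theorem smc_psi_tilde_unbiased
    {𝒳 : Type*} [MeasurableSpace 𝒳]
    {Ω : Type*} {mΩ : MeasurableSpace Ω} (P : Measure Ω) [IsProbabilityMeasure P]
    (N M r : ℕ) (hM : 1 ≤ M) (hN : 1 ≤ N)
    (τ : ℕ → ℕ) (hτ0 : τ 0 = 0) (hτmono : ∀ s, s ≤ r → τ s < τ (s + 1))
    (hτN : τ (r + 1) = N)
    -- the proposal law `Q` on path space and its conditional kernels `κ n` given the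
    -- first `n` coordinates (composition of the proposal kernels `q_{n+1}, q_{n+2}, …`)
    (Q : Measure (ℕ → 𝒳)) [IsProbabilityMeasure Q]
    (κ : ℕ → Kernel (ℕ → 𝒳) (ℕ → 𝒳)) [∀ n, IsMarkovKernel (κ n)]
    (hκsupp : ∀ n x, (κ n x) {y | ∀ k, 1 ≤ k → k ≤ n → y k = x k} = 1)
    (hκloc : ∀ n x y, (∀ k, 1 ≤ k → k ≤ n → x k = y k) → κ n x = κ n y)
    (hκQ : ∀ n, n ≤ N → Q.bind (κ n) = Q)
    (hκcomp : ∀ m n, m ≤ n → n ≤ N → ∀ x, (κ m x).bind (κ n) = κ m x)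
    -- strictly positive incremental weights
    (α : ℕ → (ℕ → 𝒳) → ℝ) (hαmeas : ∀ n, Measurable (α n))
    (hαpos : ∀ n x, 0 < α n x)
    (hαloc : ∀ n x y, (∀ k, 1 ≤ k → k ≤ n → x k = y k) → α n x = α n y)
    -- normalizing constant and likelihood ratio `L_N = π_N / ∏ q_n = (∏ α_n) / Z_N`
    (ZN : ℝ) (hZNpos : 0 < ZN)
    (hZN : ∫ x, ∏ n ∈ Finset.Icc 1 N, α n x ∂Q = ZN)
    (L : (ℕ → 𝒳) → ℝ) (hL : ∀ x, L x = (∏ n ∈ Finset.Icc 1 N, α n x) / ZN)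
    -- test function `ψ` with `ψ(X_{1:N}) L_N(X_{1:N})` integrable
    (ψ : (ℕ → 𝒳) → ℝ) (hψmeas : Measurable ψ)
    (hψloc : ∀ x y, (∀ k, 1 ≤ k → k ≤ N → x k = y k) → ψ x = ψ y)
    (hψLint : Integrable (fun x => ψ x * L x) Q)
    (ψN : ℝ) (hψN : ψN = ∫ x, ψ x * L x ∂Q)
    -- the particle system: `X s i` is particle `i`'s path just before the `s`-th
    -- resampling, `Xbar s i` the path just after it; `𝓕` is the filtration
    (𝓕 : ℕ → MeasurableSpace Ω)
    (h𝓕le : ∀ k, 𝓕 k ≤ mΩ) (h𝓕mono : Monotone 𝓕)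
    (X Xbar : ℕ → Fin M → Ω → (ℕ → 𝒳))
    (hXmeas : ∀ s, 1 ≤ s → s ≤ r + 1 → ∀ i, Measurable[𝓕 (2 * s - 1)] (X s i))
    (hXbarmeas : ∀ s, 1 ≤ s → s ≤ r → ∀ i, Measurable[𝓕 (2 * s)] (Xbar s i))
    -- accumulated incremental weights and resampling probabilities
    (v : ℕ → Fin M → Ω → ℝ)
    (hv : ∀ s, 1 ≤ s → s ≤ r + 1 → ∀ i ω,
      v s i ω = ∏ n ∈ Finset.Icc (τ (s - 1) + 1) (τ s), α n (X s i ω))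
    (vbar : ℕ → Ω → ℝ)
    (hvbar : ∀ s, 1 ≤ s → s ≤ r + 1 → ∀ ω, vbar s ω = (∑ j, v s j ω) / M)
    (V : ℕ → Fin M → Ω → ℝ)
    (hV : ∀ s, 1 ≤ s → s ≤ r + 1 → ∀ i ω, V s i ω = v s i ω / (M * vbar s ω))
    -- (i) multinomial resampling: conditionally on `𝓕 (2s−1)` the resampled paths are
    -- i.i.d., each equal to `X s j` with probability `V s j`
    (I : ℕ → Fin M → Ω → Fin M)
    (hXbarI : ∀ s, 1 ≤ s → s ≤ r → ∀ i ω, Xbar s i ω = X s (I s i ω) ω)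
    (hresample : ∀ s, 1 ≤ s → s ≤ r → ∀ js : Fin M → Fin M,
      P[(fun ω => ({ω' | ∀ i, I s i ω' = js i} : Set Ω).indicator
          (fun _ => (1 : ℝ)) ω) | 𝓕 (2 * s - 1)]
        =ᵐ[P] fun ω => ∏ i, V s (js i) ω)
    -- (ii) conditionally independent propagation according to the proposal kernels,
    -- extending the resampled ancestors
    (hXext : ∀ s, 1 ≤ s → s ≤ r → ∀ i ω k, 1 ≤ k → k ≤ τ s →
      X (s + 1) i ω k = Xbar s i ω k)
    (hinit : ∀ f : Fin M → (ℕ → 𝒳) → ℝ,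
      (∀ i, Measurable (f i)) → (∀ i, ∃ C, ∀ x, |f i x| ≤ C) →
      ∫ ω, ∏ i, f i (X 1 i ω) ∂P = ∏ i : Fin M, ∫ y, f i y ∂Q)
    (hprop : ∀ s, 1 ≤ s → s ≤ r → ∀ f : Fin M → (ℕ → 𝒳) → ℝ,
      (∀ i, Measurable (f i)) → (∀ i, ∃ C, ∀ x, |f i x| ≤ C) →
      P[(fun ω => ∏ i, f i (X (s + 1) i ω)) | 𝓕 (2 * s)]
        =ᵐ[P] fun ω => ∏ i, ∫ y, f i y ∂(κ (τ s) (Xbar s i ω)))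
    -- the post-resampling weights `H`
    (H : ℕ → Fin M → Ω → ℝ)
    (hH0 : ∀ i ω, H 0 i ω = 1)
    (hH : ∀ s, 1 ≤ s → s ≤ r → ∀ i ω,
      H s i ω = (∏ t ∈ Finset.Icc 1 s, vbar t ω)
        / ∏ n ∈ Finset.Icc 1 (τ s), α n (Xbar s i ω))
    -- the estimator `ψ̃_OR`
    (ψtil : Ω → ℝ)
    (hψtil : ∀ ω, ψtil ω
      = (1 / M) * ∑ i, L (X (r + 1) i ω) * ψ (X (r + 1) i ω) * H r i ω) :
    ∫ ω, ψtil ω ∂P = ψN := by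
  classical
  have hMpos : (0:ℝ) < M := by exact_mod_cast hM
  have hMennz : (M : ℝ≥0∞) ≠ 0 := by
    simp only [ne_eq, Nat.cast_eq_zero]; omega
  have hMenntop : (M : ℝ≥0∞) ≠ ⊤ := ENNReal.natCast_ne_top M
  have hFinM : Nonempty (Fin M) := ⟨⟨0, hM⟩⟩
  have hτmono' : ∀ s t, s ≤ t → t ≤ r + 1 → τ s ≤ τ t := by
    intro s t hst htr
    induction t with
    | zero => simp [Nat.le_zero.mp hst]
    | succ t ih =>
      rcases Nat.lt_or_ge s (t + 1) with h | h
      · exact le_trans (ih (Nat.lt_succ_iff.mp h) (by omega))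
          (le_of_lt (hτmono t (by omega)))
      · have : s = t + 1 := le_antisymm hst h
        simp [this]
  have hτleN : ∀ s, s ≤ r + 1 → τ s ≤ N := fun s hs => by
    simpa [hτN] using hτmono' s (r + 1) hs le_rfl
  have hXm : ∀ s, 1 ≤ s → s ≤ r + 1 → ∀ i, Measurable (X s i) :=
    fun s h1 h2 i => fun _ ht => h𝓕le _ _ (hXmeas s h1 h2 i ht)
  have hXbarm : ∀ s, 1 ≤ s → s ≤ r → ∀ i, Measurable (Xbar s i) :=
    fun s h1 h2 i => fun _ ht => h𝓕le _ _ (hXbarmeas s h1 h2 i ht)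
  have hprodpos : ∀ (A : Finset ℕ) (x : ℕ → 𝒳), 0 < ∏ n ∈ A, α n x :=
    fun A x => Finset.prod_pos fun n _ => hαpos n x
  have hvpos : ∀ s, 1 ≤ s → s ≤ r + 1 → ∀ i ω, 0 < v s i ω := by
    intro s h1 h2 i ω; rw [hv s h1 h2 i ω]; exact hprodpos _ _
  have hvbarpos : ∀ s, 1 ≤ s → s ≤ r + 1 → ∀ ω, 0 < vbar s ω := by
    intro s h1 h2 ω; rw [hvbar s h1 h2 ω]
    exact div_pos (Finset.sum_pos (fun i _ => hvpos s h1 h2 i ω) Finset.univ_nonempty) hMpos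
  have hVpos : ∀ s, 1 ≤ s → s ≤ r + 1 → ∀ i ω, 0 < V s i ω := by
    intro s h1 h2 i ω; rw [hV s h1 h2 i ω]
    exact div_pos (hvpos s h1 h2 i ω) (mul_pos hMpos (hvbarpos s h1 h2 ω))
  have hvmeasF : ∀ s, 1 ≤ s → s ≤ r + 1 → ∀ i, Measurable[𝓕 (2 * s - 1)] (v s i) := by
    intro s h1 h2 i
    have hrw : v s i = fun ω => ∏ n ∈ Finset.Icc (τ (s - 1) + 1) (τ s), α n (X s i ω) :=
      funext fun ω => hv s h1 h2 i ω
    rw [hrw]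
    exact Finset.measurable_prod _ fun n _ => (hαmeas n).comp (hXmeas s h1 h2 i)
  have hvbarmeasF : ∀ s, 1 ≤ s → s ≤ r + 1 → Measurable[𝓕 (2 * s - 1)] (vbar s) := by
    intro s h1 h2
    have hrw : vbar s = fun ω => (∑ j, v s j ω) / M := funext fun ω => hvbar s h1 h2 ω
    rw [hrw]
    exact (Finset.measurable_sum _ fun j _ => hvmeasF s h1 h2 j).div_const _
  have hVmeasF : ∀ s, 1 ≤ s → s ≤ r + 1 → ∀ i, Measurable[𝓕 (2 * s - 1)] (V s i) := by
    intro s h1 h2 i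
    have hrw : V s i = fun ω => v s i ω / (M * vbar s ω) := funext fun ω => hV s h1 h2 i ω
    rw [hrw]
    exact (hvmeasF s h1 h2 i).div (measurable_const.mul (hvbarmeasF s h1 h2))
  have P1 : ∀ (f : (ℕ → 𝒳) → ℝ≥0∞), Measurable f → ∀ i₀ : Fin M,
      ∫⁻ ω, f (X 1 i₀ ω) ∂P = ∫⁻ y, f y ∂Q := by
    intro f hf i₀
    have hX1 : Measurable (X 1 i₀) := hXm 1 le_rfl (by omega) i₀
    have base : ∀ K : ℕ, ∫⁻ ω, min (f (X 1 i₀ ω)) (K : ℝ≥0∞) ∂P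
        = ∫⁻ y, min (f y) (K : ℝ≥0∞) ∂Q := by
      intro K
      set fK : (ℕ → 𝒳) → ℝ := fun y => (min (f y) (K : ℝ≥0∞)).toReal with hfKdef
      have hfKmeas : Measurable fK :=
        ENNReal.measurable_toReal.comp (hf.min measurable_const)
      have hfKnn : ∀ y, 0 ≤ fK y := fun y => ENNReal.toReal_nonneg
      have hfKbd : ∀ y, |fK y| ≤ (K : ℝ) := fun y => SMCUnbiasedAux.trunc_toReal_le _ K
      have hmeas' : ∀ i : Fin M, Measurable (if i = i₀ then fK else fun _ => (1 : ℝ)) := by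
        intro i
        by_cases h : i = i₀
        · simpa [h] using hfKmeas
        · simpa [h] using (measurable_const : Measurable fun _ : (ℕ → 𝒳) => (1 : ℝ))
      have hbd' : ∀ i : Fin M, ∃ C, ∀ x, |(if i = i₀ then fK else fun _ => (1 : ℝ)) x| ≤ C := by
        intro i
        by_cases h : i = i₀
        · exact ⟨K, by simpa [h] using hfKbd⟩
        · exact ⟨1, by simp [h]⟩
      have h0 := hinit _ hmeas' hbd'
      have hLeq : ∀ ω, (∏ i, (if i = i₀ then fK else fun _ => (1 : ℝ)) (X 1 i ω))
          = fK (X 1 i₀ ω) := by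
        intro ω
        rw [Finset.prod_eq_single i₀ (fun j _ hj => by simp [hj]) (by simp)]
        simp
      have hReq : (∏ i : Fin M, ∫ y, (if i = i₀ then fK else fun _ => (1 : ℝ)) y ∂Q)
          = ∫ y, fK y ∂Q := by
        rw [Finset.prod_eq_single i₀ (fun j _ hj => by simp [hj]) (by simp)]
        simp
      have hFint : Integrable (fun ω => fK (X 1 i₀ ω)) P :=
        (integrable_const (K : ℝ)).mono' (hfKmeas.comp hX1).aestronglyMeasurable
          (Filter.Eventually.of_forall fun ω => by
            simpa [Real.norm_eq_abs] using hfKbd (X 1 i₀ ω))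
      have hfKint : Integrable fK Q :=
        (integrable_const (K : ℝ)).mono' hfKmeas.aestronglyMeasurable
          (Filter.Eventually.of_forall fun y => by simpa [Real.norm_eq_abs] using hfKbd y)
      calc ∫⁻ ω, min (f (X 1 i₀ ω)) (K : ℝ≥0∞) ∂P
          = ∫⁻ ω, ENNReal.ofReal (fK (X 1 i₀ ω)) ∂P :=
            lintegral_congr fun ω => (SMCUnbiasedAux.ofReal_trunc_toReal _ _).symm
        _ = ENNReal.ofReal (∫ ω, fK (X 1 i₀ ω) ∂P) :=
            (ofReal_integral_eq_lintegral_ofReal hFint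
              (Filter.Eventually.of_forall fun ω => hfKnn _)).symm
        _ = ENNReal.ofReal (∫ y, fK y ∂Q) := by
            congr 1
            calc ∫ ω, fK (X 1 i₀ ω) ∂P
                = ∫ ω, ∏ i, (if i = i₀ then fK else fun _ => (1 : ℝ)) (X 1 i ω) ∂P :=
                  integral_congr_ae (Filter.Eventually.of_forall fun ω => (hLeq ω).symm)
              _ = _ := h0.trans hReq
        _ = ∫⁻ y, ENNReal.ofReal (fK y) ∂Q :=
            ofReal_integral_eq_lintegral_ofReal hfKint (Filter.Eventually.of_forall hfKnn)
        _ = ∫⁻ y, min (f y) (K : ℝ≥0∞) ∂Q :=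
            lintegral_congr fun y => SMCUnbiasedAux.ofReal_trunc_toReal _ _
    have hmono1 : Monotone fun (K : ℕ) => fun ω => min (f (X 1 i₀ ω)) (K : ℝ≥0∞) :=
      fun K L hKL ω => min_le_min le_rfl (Nat.cast_le.mpr hKL)
    have hmono2 : Monotone fun (K : ℕ) => fun y => min (f y) (K : ℝ≥0∞) :=
      fun K L hKL y => min_le_min le_rfl (Nat.cast_le.mpr hKL)
    calc ∫⁻ ω, f (X 1 i₀ ω) ∂P
        = ∫⁻ ω, ⨆ K : ℕ, min (f (X 1 i₀ ω)) (K : ℝ≥0∞) ∂P :=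
          lintegral_congr fun ω => (SMCUnbiasedAux.iSup_min_natCast _).symm
      _ = ⨆ K : ℕ, ∫⁻ ω, min (f (X 1 i₀ ω)) (K : ℝ≥0∞) ∂P :=
          lintegral_iSup (fun K => (hf.comp hX1).min measurable_const) hmono1
      _ = ⨆ K : ℕ, ∫⁻ y, min (f y) (K : ℝ≥0∞) ∂Q := by simp only [base]
      _ = ∫⁻ y, ⨆ K : ℕ, min (f y) (K : ℝ≥0∞) ∂Q :=
          (lintegral_iSup (fun K => hf.min measurable_const) hmono2).symm
      _ = ∫⁻ y, f y ∂Q := lintegral_congr fun y => SMCUnbiasedAux.iSup_min_natCast _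
  have P2 : ∀ s, 1 ≤ s → s ≤ r → ∀ (i₀ : Fin M) (f : (ℕ → 𝒳) → ℝ≥0∞), Measurable f →
      ∀ w : Ω → ℝ≥0∞, Measurable[𝓕 (2 * s)] w →
      ∫⁻ ω, w ω * f (X (s + 1) i₀ ω) ∂P
        = ∫⁻ ω, w ω * ∫⁻ y, f y ∂(κ (τ s) (Xbar s i₀ ω)) ∂P := by
    intro s hs1 hs2 i₀ f hf w hw
    have hXsp1 : Measurable (X (s + 1) i₀) := hXm (s + 1) (by omega) (by omega) i₀
    have hXbarF : Measurable[𝓕 (2 * s)] (Xbar s i₀) := hXbarmeas s hs1 hs2 i₀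
    have hXbarmΩ : Measurable (Xbar s i₀) := hXbarm s hs1 hs2 i₀
    have hwmΩ : Measurable w := fun _ ht => h𝓕le _ _ (hw ht)
    have hker : ∀ (h : (ℕ → 𝒳) → ℝ≥0∞), Measurable h →
        Measurable fun x => ∫⁻ y, h y ∂(κ (τ s) x) := fun h hh =>
      Measurable.lintegral_kernel_prod_right' (κ := κ (τ s)) (hh.comp measurable_snd)
    have base : ∀ K : ℕ, ∫⁻ ω, w ω * min (f (X (s + 1) i₀ ω)) (K : ℝ≥0∞) ∂P
        = ∫⁻ ω, w ω * ∫⁻ y, min (f y) (K : ℝ≥0∞) ∂(κ (τ s) (Xbar s i₀ ω)) ∂P := by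
      intro K
      set fK : (ℕ → 𝒳) → ℝ := fun y => (min (f y) (K : ℝ≥0∞)).toReal with hfKdef
      have hfKmeas : Measurable fK :=
        ENNReal.measurable_toReal.comp (hf.min measurable_const)
      have hfKnn : ∀ y, 0 ≤ fK y := fun y => ENNReal.toReal_nonneg
      have hfKbd : ∀ y, |fK y| ≤ (K : ℝ) := fun y => SMCUnbiasedAux.trunc_toReal_le _ K
      have hmeas' : ∀ i : Fin M, Measurable (if i = i₀ then fK else fun _ => (1 : ℝ)) := by
        intro i
        by_cases h : i = i₀
        · simpa [h] using hfKmeas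
        · simpa [h] using (measurable_const : Measurable fun _ : (ℕ → 𝒳) => (1 : ℝ))
      have hbd' : ∀ i : Fin M, ∃ C, ∀ x, |(if i = i₀ then fK else fun _ => (1 : ℝ)) x| ≤ C := by
        intro i
        by_cases h : i = i₀
        · exact ⟨K, by simpa [h] using hfKbd⟩
        · exact ⟨1, by simp [h]⟩
      have h0 := hprop s hs1 hs2 _ hmeas' hbd'
      have hLfun : (fun ω => ∏ i, (if i = i₀ then fK else fun _ => (1 : ℝ)) (X (s + 1) i ω))
          = fun ω => fK (X (s + 1) i₀ ω) := funext fun ω => by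
        rw [Finset.prod_eq_single i₀ (fun j _ hj => by simp [hj]) (by simp)]; simp
      have hRfun : (fun ω => ∏ i, ∫ y,
            (if i = i₀ then fK else fun _ => (1 : ℝ)) y ∂(κ (τ s) (Xbar s i ω)))
          = fun ω => ∫ y, fK y ∂(κ (τ s) (Xbar s i₀ ω)) := funext fun ω => by
        rw [Finset.prod_eq_single i₀ (fun j _ hj => by simp [hj]) (by simp)]; simp
      rw [hLfun, hRfun] at h0
      have hGrw : (fun ω => ∫ y, fK y ∂(κ (τ s) (Xbar s i₀ ω)))
          = fun ω => (∫⁻ y, min (f y) (K : ℝ≥0∞) ∂(κ (τ s) (Xbar s i₀ ω))).toReal := by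
        funext ω
        exact integral_toReal (hf.min measurable_const).aemeasurable
          (Filter.Eventually.of_forall fun y =>
            lt_of_le_of_lt (min_le_right _ _) (ENNReal.natCast_lt_top K))
      have hlt_top : ∀ x : ℕ → 𝒳,
          ∫⁻ y, min (f y) (K : ℝ≥0∞) ∂(κ (τ s) x) ≤ (K : ℝ≥0∞) := by
        intro x
        calc ∫⁻ y, min (f y) (K : ℝ≥0∞) ∂(κ (τ s) x)
            ≤ ∫⁻ _, (K : ℝ≥0∞) ∂(κ (τ s) x) := lintegral_mono fun y => min_le_right _ _
          _ = (K : ℝ≥0∞) := by simp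
      have hGmeasF : Measurable[𝓕 (2 * s)]
          fun ω => (∫⁻ y, min (f y) (K : ℝ≥0∞) ∂(κ (τ s) (Xbar s i₀ ω))).toReal :=
        ENNReal.measurable_toReal.comp ((hker _ (hf.min measurable_const)).comp hXbarF)
      rw [hGrw] at h0
      have hFint : Integrable (fun ω => fK (X (s + 1) i₀ ω)) P :=
        (integrable_const (K : ℝ)).mono' (hfKmeas.comp hXsp1).aestronglyMeasurable
          (Filter.Eventually.of_forall fun ω => by
            simpa [Real.norm_eq_abs] using hfKbd (X (s + 1) i₀ ω))
      have key := SMCUnbiasedAux.weighted_lintegral_of_condexp P (h𝓕le (2 * s))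
        hFint (Filter.Eventually.of_forall fun ω => hfKnn _) hGmeasF h0 hw
      calc ∫⁻ ω, w ω * min (f (X (s + 1) i₀ ω)) (K : ℝ≥0∞) ∂P
          = ∫⁻ ω, w ω * ENNReal.ofReal (fK (X (s + 1) i₀ ω)) ∂P :=
            lintegral_congr fun ω => by rw [SMCUnbiasedAux.ofReal_trunc_toReal]
        _ = ∫⁻ ω, w ω * ENNReal.ofReal
              ((∫⁻ y, min (f y) (K : ℝ≥0∞) ∂(κ (τ s) (Xbar s i₀ ω))).toReal) ∂P := key
        _ = ∫⁻ ω, w ω * ∫⁻ y, min (f y) (K : ℝ≥0∞) ∂(κ (τ s) (Xbar s i₀ ω)) ∂P :=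
            lintegral_congr fun ω => by
              rw [ENNReal.ofReal_toReal
                (ne_top_of_le_ne_top (ENNReal.natCast_ne_top K) (hlt_top _))]
    have hmono1 : Monotone fun (K : ℕ) (ω : Ω) =>
        w ω * min (f (X (s + 1) i₀ ω)) (K : ℝ≥0∞) :=
      fun K L hKL ω => mul_le_mul_right (min_le_min le_rfl (Nat.cast_le.mpr hKL)) _
    have hmono2 : Monotone fun (K : ℕ) (ω : Ω) =>
        w ω * ∫⁻ y, min (f y) (K : ℝ≥0∞) ∂(κ (τ s) (Xbar s i₀ ω)) :=
      fun K L hKL ω => mul_le_mul_right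
        (lintegral_mono fun y => min_le_min le_rfl (Nat.cast_le.mpr hKL)) _
    calc ∫⁻ ω, w ω * f (X (s + 1) i₀ ω) ∂P
        = ∫⁻ ω, ⨆ K : ℕ, w ω * min (f (X (s + 1) i₀ ω)) (K : ℝ≥0∞) ∂P := by
          refine lintegral_congr fun ω => ?_
          rw [← ENNReal.mul_iSup, SMCUnbiasedAux.iSup_min_natCast]
      _ = ⨆ K : ℕ, ∫⁻ ω, w ω * min (f (X (s + 1) i₀ ω)) (K : ℝ≥0∞) ∂P :=
          lintegral_iSup (fun K => hwmΩ.mul ((hf.comp hXsp1).min measurable_const)) hmono1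
      _ = ⨆ K : ℕ, ∫⁻ ω, w ω * ∫⁻ y, min (f y) (K : ℝ≥0∞) ∂(κ (τ s) (Xbar s i₀ ω)) ∂P := by
          simp only [base]
      _ = ∫⁻ ω, ⨆ K : ℕ, w ω * ∫⁻ y, min (f y) (K : ℝ≥0∞) ∂(κ (τ s) (Xbar s i₀ ω)) ∂P :=
          (lintegral_iSup (fun K => hwmΩ.mul
            ((hker _ (hf.min measurable_const)).comp hXbarmΩ)) hmono2).symm
      _ = ∫⁻ ω, w ω * ∫⁻ y, f y ∂(κ (τ s) (Xbar s i₀ ω)) ∂P := by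
          refine lintegral_congr fun ω => ?_
          rw [← ENNReal.mul_iSup]
          congr 1
          rw [← lintegral_iSup (fun K => hf.min measurable_const)
            (fun K L hKL y => min_le_min le_rfl (Nat.cast_le.mpr hKL))]
          exact lintegral_congr fun y => by rw [SMCUnbiasedAux.iSup_min_natCast]
  have P3 : ∀ s, 1 ≤ s → s ≤ r → ∀ (i₀ : Fin M) (f : (ℕ → 𝒳) → ℝ≥0∞), Measurable f →
      ∀ w : Ω → ℝ≥0∞, Measurable[𝓕 (2 * s - 1)] w →
      ∫⁻ ω, w ω * f (Xbar s i₀ ω) ∂P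
        = ∫⁻ ω, w ω * ∑ j, ENNReal.ofReal (V s j ω) * f (X s j ω) ∂P := by
    intro s hs1 hs2 i₀ f hf w hw
    have hsr1 : s ≤ r + 1 := by omega
    have hXsF : ∀ j, Measurable[𝓕 (2 * s - 1)] (X s j) := hXmeas s hs1 hsr1
    have hXsm : ∀ j, Measurable (X s j) := hXm s hs1 hsr1
    have hwmΩ : Measurable w := fun _ ht => h𝓕le _ _ (hw ht)
    have hVnn : ∀ j ω, 0 ≤ V s j ω := fun j ω => (hVpos s hs1 hsr1 j ω).le
    have hVsum : ∀ ω, ∑ j, V s j ω = 1 := by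
      intro ω
      have hSpos : 0 < ∑ j, v s j ω :=
        Finset.sum_pos (fun i _ => hvpos s hs1 hsr1 i ω) Finset.univ_nonempty
      have h1 : ∑ j, V s j ω = (∑ j, v s j ω) / (M * vbar s ω) := by
        rw [Finset.sum_div]
        exact Finset.sum_congr rfl fun j _ => hV s hs1 hsr1 j ω
      rw [h1, hvbar s hs1 hsr1 ω, mul_div_cancel₀ _ (ne_of_gt hMpos)]
      exact div_self (ne_of_gt hSpos)
    have hoVsum : ∀ ω, ∑ j, ENNReal.ofReal (V s j ω) = 1 := by
      intro ω
      rw [← ENNReal.ofReal_sum_of_nonneg fun j _ => hVnn j ω, hVsum ω, ENNReal.ofReal_one]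
    have hindint : ∀ js : Fin M → Fin M, Integrable
        (fun ω => (({ω' | ∀ i, I s i ω' = js i}) : Set Ω).indicator (fun _ => (1 : ℝ)) ω) P := by
      intro js
      by_cases hint : Integrable
        (fun ω => (({ω' | ∀ i, I s i ω' = js i}) : Set Ω).indicator (fun _ => (1 : ℝ)) ω) P
      · exact hint
      · exfalso
        have hre := hresample s hs1 hs2 js
        rw [condExp_of_not_integrable hint] at hre
        haveI : (ae P).NeBot := ae_neBot.mpr (by
          intro h
          have h2 := measure_univ (μ := P)
          rw [h] at h2
          simp at h2)
        obtain ⟨ω, hω⟩ := hre.exists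
        have hω' : (0 : ℝ) = ∏ i : Fin M, V s (js i) ω := hω
        have hpos := Finset.prod_pos fun i (_ : i ∈ Finset.univ) => hVpos s hs1 hsr1 (js i) ω
        exact absurd hω'.symm (ne_of_gt hpos)
    have hjs : ∀ (js : Fin M → Fin M) (w' : Ω → ℝ≥0∞), Measurable[𝓕 (2 * s - 1)] w' →
        ∫⁻ ω, w' ω * ENNReal.ofReal
            ((({ω' | ∀ i, I s i ω' = js i}) : Set Ω).indicator (fun _ => (1 : ℝ)) ω) ∂P
          = ∫⁻ ω, w' ω * ENNReal.ofReal (∏ i, V s (js i) ω) ∂P := by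
      intro js w' hw'
      exact SMCUnbiasedAux.weighted_lintegral_of_condexp P (h𝓕le (2 * s - 1)) (hindint js)
        (Filter.Eventually.of_forall fun ω => Set.indicator_nonneg (fun _ _ => zero_le_one) ω)
        (Finset.measurable_prod _ fun i _ => hVmeasF s hs1 hsr1 (js i))
        (hresample s hs1 hs2 js) hw'
    have hdecomp : ∀ ω, (∑ js : Fin M → Fin M,
        (w ω * f (X s (js i₀) ω)) * ENNReal.ofReal
          ((({ω' | ∀ i, I s i ω' = js i}) : Set Ω).indicator (fun _ => (1 : ℝ)) ω))
        = w ω * f (Xbar s i₀ ω) := by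
      intro ω
      rw [Finset.sum_eq_single (fun i => I s i ω)
        (fun js _ hjs' => by
          have hnm : ω ∉ {ω' | ∀ i, I s i ω' = js i} :=
            fun hmem => hjs' (funext fun i => (hmem i).symm)
          rw [Set.indicator_of_notMem hnm]
          simp)
        (fun h => absurd (Finset.mem_univ _) h)]
      have hmem : ω ∈ {ω' : Ω | ∀ i : Fin M, I s i ω' = (fun i' : Fin M => I s i' ω) i} :=
        fun i => rfl
      rw [Set.indicator_of_mem hmem]
      rw [hXbarI s hs1 hs2 i₀ ω]
      simp
    calc ∫⁻ ω, w ω * f (Xbar s i₀ ω) ∂P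
        = ∫⁻ ω, ∑ js : Fin M → Fin M, (w ω * f (X s (js i₀) ω)) * ENNReal.ofReal
            ((({ω' | ∀ i, I s i ω' = js i}) : Set Ω).indicator (fun _ => (1 : ℝ)) ω) ∂P :=
          (lintegral_congr fun ω => (hdecomp ω)).symm
      _ = ∑ js : Fin M → Fin M, ∫⁻ ω, (w ω * f (X s (js i₀) ω)) * ENNReal.ofReal
            ((({ω' | ∀ i, I s i ω' = js i}) : Set Ω).indicator (fun _ => (1 : ℝ)) ω) ∂P :=
          lintegral_finset_sum' _ fun js _ =>
            ((hwmΩ.mul (hf.comp (hXsm (js i₀)))).aemeasurable.mul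
              (ENNReal.measurable_ofReal.comp_aemeasurable (hindint js).1.aemeasurable))
      _ = ∑ js : Fin M → Fin M, ∫⁻ ω, (w ω * f (X s (js i₀) ω)) * ENNReal.ofReal
            (∏ i, V s (js i) ω) ∂P :=
          Finset.sum_congr rfl fun js _ => hjs js _ (hw.mul (hf.comp (hXsF (js i₀))))
      _ = ∫⁻ ω, ∑ js : Fin M → Fin M, (w ω * f (X s (js i₀) ω)) * ENNReal.ofReal
            (∏ i, V s (js i) ω) ∂P :=
          (lintegral_finset_sum _ fun js _ =>
            (hwmΩ.mul (hf.comp (hXsm (js i₀)))).mul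
              (ENNReal.measurable_ofReal.comp
                (Finset.measurable_prod _ fun i _ =>
                  fun _ ht => h𝓕le _ _ (hVmeasF s hs1 hsr1 (js i) ht)))).symm
      _ = ∫⁻ ω, w ω * ∑ j, ENNReal.ofReal (V s j ω) * f (X s j ω) ∂P := by
          refine lintegral_congr fun ω => ?_
          have hofprod : ∀ js : Fin M → Fin M, ENNReal.ofReal (∏ i, V s (js i) ω)
              = ∏ i, ENNReal.ofReal (V s (js i) ω) :=
            fun js => ENNReal.ofReal_prod_of_nonneg fun i _ => hVnn _ ω
          calc ∑ js : Fin M → Fin M, (w ω * f (X s (js i₀) ω)) * ENNReal.ofReal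
                (∏ i, V s (js i) ω)
              = w ω * ∑ js : Fin M → Fin M,
                  (∏ i, ENNReal.ofReal (V s (js i) ω)) * f (X s (js i₀) ω) := by
                rw [Finset.mul_sum]
                exact Finset.sum_congr rfl fun js _ => by rw [hofprod js]; ring
            _ = w ω * ∑ j, ENNReal.ofReal (V s j ω) * f (X s j ω) := by
                congr 1
                calc ∑ js : Fin M → Fin M,
                      (∏ i, ENNReal.ofReal (V s (js i) ω)) * f (X s (js i₀) ω)
                    = ∑ js : Fin M → Fin M, ∏ i, (if i = i₀ then
                        ENNReal.ofReal (V s (js i) ω) * f (X s (js i) ω)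
                        else ENNReal.ofReal (V s (js i) ω)) := by
                      refine Finset.sum_congr rfl fun js _ => ?_
                      have hsplit : ∀ i : Fin M, (if i = i₀ then
                          ENNReal.ofReal (V s (js i) ω) * f (X s (js i) ω)
                          else ENNReal.ofReal (V s (js i) ω))
                          = ENNReal.ofReal (V s (js i) ω)
                            * (if i = i₀ then f (X s (js i) ω) else 1) := by
                        intro i; by_cases h : i = i₀ <;> simp [h]
                      rw [Finset.prod_congr rfl fun i _ => hsplit i, Finset.prod_mul_distrib,
                        Finset.prod_ite_eq' Finset.univ i₀ fun i => f (X s (js i) ω)]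
                      simp
                  _ = ∏ i : Fin M, ∑ b : Fin M, (if i = i₀ then
                        ENNReal.ofReal (V s b ω) * f (X s b ω)
                        else ENNReal.ofReal (V s b ω)) := by
                      rw [← Fintype.piFinset_univ]
                      exact (Finset.prod_univ_sum (fun _ => Finset.univ)
                        (fun i b => if i = i₀ then ENNReal.ofReal (V s b ω) * f (X s b ω)
                          else ENNReal.ofReal (V s b ω))).symm
                  _ = ∑ b : Fin M, ENNReal.ofReal (V s b ω) * f (X s b ω) := by
                      rw [Finset.prod_eq_single i₀
                        (fun i _ hi => by simp [hi, hoVsum ω])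
                        (fun h => absurd (Finset.mem_univ _) h)]
                      simp
  have hpull : ∀ (m : ℕ) (A : Finset ℕ), (∀ n ∈ A, n ≤ m) →
      ∀ (x : ℕ → 𝒳) (h : (ℕ → 𝒳) → ℝ≥0∞), Measurable h →
      ∫⁻ y, (∏ n ∈ A, ENNReal.ofReal (α n y)) * h y ∂(κ m x)
        = (∏ n ∈ A, ENNReal.ofReal (α n x)) * ∫⁻ y, h y ∂(κ m x) := by
    intro m A hA x h hh
    have hmeasset : MeasurableSet {y : ℕ → 𝒳 |
        (∏ n ∈ A, ENNReal.ofReal (α n y)) = ∏ n ∈ A, ENNReal.ofReal (α n x)} :=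
      (Finset.measurable_prod A fun n _ => ENNReal.measurable_ofReal.comp (hαmeas n))
        (measurableSet_singleton _)
    have hsub : {y : ℕ → 𝒳 | ∀ k, 1 ≤ k → k ≤ m → y k = x k}
        ⊆ {y : ℕ → 𝒳 | (∏ n ∈ A, ENNReal.ofReal (α n y))
            = ∏ n ∈ A, ENNReal.ofReal (α n x)} := by
      intro y hy
      exact Finset.prod_congr rfl fun n hn =>
        congrArg ENNReal.ofReal (hαloc n y x fun k h1 h2 => hy k h1 (le_trans h2 (hA n hn)))
    have h1 : (κ m x) {y : ℕ → 𝒳 | (∏ n ∈ A, ENNReal.ofReal (α n y))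
        = ∏ n ∈ A, ENNReal.ofReal (α n x)} = 1 :=
      le_antisymm (by exact prob_le_one) (by rw [← hκsupp m x]; exact measure_mono hsub)
    have hae : ∀ᵐ y ∂(κ m x), (∏ n ∈ A, ENNReal.ofReal (α n y))
        = ∏ n ∈ A, ENNReal.ofReal (α n x) := by
      refine ae_iff.mpr ?_
      have h2 := measure_compl (μ := κ m x) hmeasset (measure_ne_top _ _)
      rw [h1, measure_univ] at h2
      simp at h2
      exact h2
    calc ∫⁻ y, (∏ n ∈ A, ENNReal.ofReal (α n y)) * h y ∂(κ m x)
        = ∫⁻ y, (∏ n ∈ A, ENNReal.ofReal (α n x)) * h y ∂(κ m x) :=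
          lintegral_congr_ae (hae.mono fun y hy => by dsimp only; rw [hy])
      _ = (∏ n ∈ A, ENNReal.ofReal (α n x)) * ∫⁻ y, h y ∂(κ m x) :=
          lintegral_const_mul _ hh
  have master : ∀ (g : (ℕ → 𝒳) → ℝ≥0∞), Measurable g →
      ∑ i, ∫⁻ ω, (g (X (r + 1) i ω)
          * ∏ n ∈ Finset.Icc 1 N, ENNReal.ofReal (α n (X (r + 1) i ω)))
          * ENNReal.ofReal (H r i ω) ∂P
        = M * ∫⁻ y, g y * ∏ n ∈ Finset.Icc 1 N, ENNReal.ofReal (α n y) ∂Q := by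
    intro g hg
    have hIcc1 : ∀ b : ℕ, Finset.Icc 1 b = Finset.Ioc 0 b := fun b => Finset.Icc_add_one_left_eq_Ioc 0 b
    have hgα : ∀ a : ℕ, Measurable fun y =>
        g y * ∏ n ∈ Finset.Ioc a N, ENNReal.ofReal (α n y) := fun a =>
      hg.mul (Finset.measurable_prod _ fun n _ => ENNReal.measurable_ofReal.comp (hαmeas n))
    have hKmeas : ∀ a b : ℕ, Measurable fun x =>
        ∫⁻ y, g y * ∏ n ∈ Finset.Ioc a N, ENNReal.ofReal (α n y) ∂(κ b x) :=
      fun a b => Measurable.lintegral_kernel_prod_right' (κ := κ b) ((hgα a).comp measurable_snd)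
    set G : ℕ → (ℕ → 𝒳) → ℝ≥0∞ := fun s x =>
      ∫⁻ y, g y * ∏ n ∈ Finset.Ioc (τ s) N, ENNReal.ofReal (α n y) ∂(κ (τ s) x) with hGdef
    set C : ℕ → Ω → ℝ≥0∞ := fun s ω => ∏ t ∈ Finset.Icc 1 s, ENNReal.ofReal (vbar t ω) with hCdef
    have hGmeas : ∀ s, Measurable (G s) := fun s => hKmeas (τ s) (τ s)
    have hCmeasF : ∀ s, 1 ≤ s → s ≤ r + 1 → Measurable[𝓕 (2 * s - 1)] (C s) := by
      intro s h1 h2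
      refine Finset.measurable_prod _ fun t ht => ?_
      have htmem := Finset.mem_Icc.mp ht
      exact ENNReal.measurable_ofReal.comp (fun _ hu =>
        h𝓕mono (by omega : 2 * t - 1 ≤ 2 * s - 1) _ (hvbarmeasF t htmem.1 (by omega) hu))
    have hCm : ∀ s, s ≤ r + 1 → Measurable (C s) := by
      intro s h2
      refine Finset.measurable_prod _ fun t ht => ?_
      have htmem := Finset.mem_Icc.mp ht
      exact ENNReal.measurable_ofReal.comp
        (fun _ hu => h𝓕le _ _ (hvbarmeasF t htmem.1 (by omega) hu))
    have hGbar : ∀ s, 1 ≤ s → s ≤ r → ∀ (j : Fin M) (ω : Ω),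
        G s (Xbar s j ω) = G s (X (s + 1) j ω) := by
      intro s h1 h2 j ω
      simp only [hGdef]
      exact congrArg (fun μ => ∫⁻ y, g y * ∏ n ∈ Finset.Ioc (τ s) N,
          ENNReal.ofReal (α n y) ∂μ)
        (hκloc (τ s) (Xbar s j ω) (X (s + 1) j ω)
          (fun k hk1 hk2 => (hXext s h1 h2 j ω k hk1 hk2).symm))
    have hbind : ∀ a b c : ℕ, a ≤ b → b ≤ N → ∀ x : ℕ → 𝒳,
        ∫⁻ z, (∫⁻ y, g y * ∏ n ∈ Finset.Ioc c N, ENNReal.ofReal (α n y) ∂(κ b z)) ∂(κ a x)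
          = ∫⁻ y, g y * ∏ n ∈ Finset.Ioc c N, ENNReal.ofReal (α n y) ∂(κ a x) := by
      intro a b c hab hbN x
      rw [← Measure.lintegral_bind (κ b).measurable.aemeasurable (hgα c).aemeasurable, hκcomp a b hab hbN x]
    have hbindQ : ∀ b c : ℕ, b ≤ N →
        ∫⁻ x, (∫⁻ y, g y * ∏ n ∈ Finset.Ioc c N, ENNReal.ofReal (α n y) ∂(κ b x)) ∂Q
          = ∫⁻ y, g y * ∏ n ∈ Finset.Ioc c N, ENNReal.ofReal (α n y) ∂Q := by
      intro b c hbN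
      rw [← Measure.lintegral_bind (κ b).measurable.aemeasurable (hgα c).aemeasurable, hκQ b hbN]
    have hovG : ∀ s : ℕ, s + 1 ≤ r + 1 → ∀ x : ℕ → 𝒳,
        (∏ n ∈ Finset.Ioc (τ s) (τ (s + 1)), ENNReal.ofReal (α n x)) * G (s + 1) x
          = ∫⁻ y, g y * ∏ n ∈ Finset.Ioc (τ s) N, ENNReal.ofReal (α n y)
              ∂(κ (τ (s + 1)) x) := by
      intro s hsr x
      simp only [hGdef]
      rw [← hpull (τ (s + 1)) (Finset.Ioc (τ s) (τ (s + 1)))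
        (fun n hn => (Finset.mem_Ioc.mp hn).2) x _ (hgα (τ (s + 1)))]
      refine lintegral_congr fun y => ?_
      rw [← Finset.prod_Ioc_consecutive (fun n => ENNReal.ofReal (α n y))
        (hτmono' s (s + 1) (by omega) (by omega)) (hτleN (s + 1) (by omega))]
      ring
    rcases Nat.eq_zero_or_pos r with hr0 | hrpos
    · subst hr0
      have hH1 : ∀ (i : Fin M) (ω : Ω), ENNReal.ofReal (H 0 i ω) = 1 := fun i ω => by
        rw [hH0 i ω, ENNReal.ofReal_one]
      calc (∑ i, ∫⁻ ω, (g (X (0 + 1) i ω)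
            * ∏ n ∈ Finset.Icc 1 N, ENNReal.ofReal (α n (X (0 + 1) i ω)))
            * ENNReal.ofReal (H 0 i ω) ∂P)
          = ∑ i : Fin M, ∫⁻ ω, (fun x => g x
              * ∏ n ∈ Finset.Icc 1 N, ENNReal.ofReal (α n x)) (X 1 i ω) ∂P :=
            Finset.sum_congr rfl fun i _ => lintegral_congr fun ω => by
              rw [hH1, mul_one]
        _ = ∑ i : Fin M, ∫⁻ y, g y * ∏ n ∈ Finset.Icc 1 N, ENNReal.ofReal (α n y) ∂Q :=
            Finset.sum_congr rfl fun i _ => P1 _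
              (hg.mul (Finset.measurable_prod _ fun n _ =>
                ENNReal.measurable_ofReal.comp (hαmeas n))) i
        _ = M * ∫⁻ y, g y * ∏ n ∈ Finset.Icc 1 N, ENNReal.ofReal (α n y) ∂Q := by
            rw [Finset.sum_const, Finset.card_univ, Fintype.card_fin, nsmul_eq_mul]
    · have hstepT : (∑ i, ∫⁻ ω, (g (X (r + 1) i ω)
            * ∏ n ∈ Finset.Icc 1 N, ENNReal.ofReal (α n (X (r + 1) i ω)))
            * ENNReal.ofReal (H r i ω) ∂P)
          = ∑ i, ∫⁻ ω, C r ω * G r (X (r + 1) i ω) ∂P := by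
        refine Finset.sum_congr rfl fun i _ => ?_
        have hbar : Measurable[𝓕 (2 * r)] (Xbar r i) := hXbarmeas r hrpos le_rfl i
        have hden : ∀ ω : Ω,
            (∏ n ∈ Finset.Icc 1 (τ r), ENNReal.ofReal (α n (Xbar r i ω))) ≠ 0 :=
          fun ω => Finset.prod_ne_zero_iff.mpr fun n _ =>
            (ENNReal.ofReal_pos.mpr (hαpos n _)).ne'
        have hdent : ∀ ω : Ω,
            (∏ n ∈ Finset.Icc 1 (τ r), ENNReal.ofReal (α n (Xbar r i ω))) ≠ ⊤ :=
          fun ω => ENNReal.prod_ne_top fun n _ => ENNReal.ofReal_ne_top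
        have hHrwp : ∀ ω : Ω, ENNReal.ofReal (H r i ω)
            = C r ω * (∏ n ∈ Finset.Icc 1 (τ r), ENNReal.ofReal (α n (Xbar r i ω)))⁻¹ := by
          intro ω
          rw [hH r hrpos le_rfl i ω, ENNReal.ofReal_div_of_pos (hprodpos _ _), div_eq_mul_inv]
          congr 1
          · simp only [hCdef]
            exact ENNReal.ofReal_prod_of_nonneg fun t ht => (hvbarpos t
              (Finset.mem_Icc.mp ht).1
              (by have := (Finset.mem_Icc.mp ht).2; omega) ω).le
          · congr 1
            exact ENNReal.ofReal_prod_of_nonneg fun n _ => (hαpos n _).le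
        have hwF : Measurable[𝓕 (2 * r)] fun ω => ENNReal.ofReal (H r i ω) := by
          rw [show (fun ω => ENNReal.ofReal (H r i ω)) = fun ω => C r ω
            * (∏ n ∈ Finset.Icc 1 (τ r), ENNReal.ofReal (α n (Xbar r i ω)))⁻¹
            from funext hHrwp]
          refine Measurable.mul ?_ ?_
          · exact fun _ hu => h𝓕mono (by omega : 2 * r - 1 ≤ 2 * r) _
              (hCmeasF r hrpos (by omega) hu)
          · exact (Finset.measurable_prod _ fun n _ =>
              ENNReal.measurable_ofReal.comp ((hαmeas n).comp hbar)).inv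
        have h2 := P2 r hrpos le_rfl i
          (fun x => g x * ∏ n ∈ Finset.Icc 1 N, ENNReal.ofReal (α n x))
          (hg.mul (Finset.measurable_prod _ fun n _ =>
            ENNReal.measurable_ofReal.comp (hαmeas n)))
          (fun ω => ENNReal.ofReal (H r i ω)) hwF
        have hinner : ∀ x : ℕ → 𝒳,
            (∫⁻ y, g y * ∏ n ∈ Finset.Icc 1 N, ENNReal.ofReal (α n y) ∂(κ (τ r) x))
              = (∏ n ∈ Finset.Icc 1 (τ r), ENNReal.ofReal (α n x)) * G r x := by
          intro x
          simp only [hGdef]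
          rw [hIcc1 (τ r), hIcc1 N]
          rw [← hpull (τ r) (Finset.Ioc 0 (τ r))
            (fun n hn => (Finset.mem_Ioc.mp hn).2) x _ (hgα (τ r))]
          refine lintegral_congr fun y => ?_
          rw [← Finset.prod_Ioc_consecutive (fun n => ENNReal.ofReal (α n y))
            (Nat.zero_le (τ r)) (hτleN r (by omega))]
          ring
        calc ∫⁻ ω, (g (X (r + 1) i ω)
              * ∏ n ∈ Finset.Icc 1 N, ENNReal.ofReal (α n (X (r + 1) i ω)))
              * ENNReal.ofReal (H r i ω) ∂P
            = ∫⁻ ω, ENNReal.ofReal (H r i ω) * (g (X (r + 1) i ω)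
                * ∏ n ∈ Finset.Icc 1 N, ENNReal.ofReal (α n (X (r + 1) i ω))) ∂P :=
              lintegral_congr fun ω => by ring
          _ = ∫⁻ ω, ENNReal.ofReal (H r i ω) * ∫⁻ y, g y
                * ∏ n ∈ Finset.Icc 1 N, ENNReal.ofReal (α n y)
                ∂(κ (τ r) (Xbar r i ω)) ∂P := h2
          _ = ∫⁻ ω, C r ω * G r (X (r + 1) i ω) ∂P := by
              refine lintegral_congr fun ω => ?_
              rw [hinner (Xbar r i ω), hHrwp ω, ← hGbar r hrpos le_rfl i ω]
              have hb0 := hden ω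
              have hbt := hdent ω
              calc C r ω * (∏ n ∈ Finset.Icc 1 (τ r), ENNReal.ofReal (α n (Xbar r i ω)))⁻¹
                    * ((∏ n ∈ Finset.Icc 1 (τ r), ENNReal.ofReal (α n (Xbar r i ω)))
                      * G r (Xbar r i ω))
                  = ((∏ n ∈ Finset.Icc 1 (τ r), ENNReal.ofReal (α n (Xbar r i ω)))
                      * (∏ n ∈ Finset.Icc 1 (τ r), ENNReal.ofReal (α n (Xbar r i ω)))⁻¹)
                    * (C r ω * G r (Xbar r i ω)) := by ring
                _ = C r ω * G r (Xbar r i ω) := by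
                    rw [ENNReal.mul_inv_cancel hb0 hbt, one_mul]
      have hred : ∀ s : ℕ, s + 1 ≤ r →
          (∑ i, ∫⁻ ω, C (s + 1) ω * G (s + 1) (X (s + 1 + 1) i ω) ∂P)
            = ∑ j, ∫⁻ ω, C s ω * (∫⁻ y, g y * ∏ n ∈ Finset.Ioc (τ s) N,
                ENNReal.ofReal (α n y) ∂(κ (τ (s + 1)) (X (s + 1) j ω))) ∂P := by
        intro s hsr
        have h1s : (1 : ℕ) ≤ s + 1 := by omega
        have hsr1 : s + 1 ≤ r + 1 := by omega
        have ha : ∀ i : Fin M, ∫⁻ ω, C (s + 1) ω * G (s + 1) (X (s + 1 + 1) i ω) ∂P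
            = ∫⁻ ω, C (s + 1) ω * G (s + 1) (Xbar (s + 1) i ω) ∂P :=
          fun i => lintegral_congr fun ω => by rw [hGbar (s + 1) h1s hsr i ω]
        have hb : ∀ i : Fin M, ∫⁻ ω, C (s + 1) ω * G (s + 1) (Xbar (s + 1) i ω) ∂P
            = ∫⁻ ω, C (s + 1) ω * ∑ j, ENNReal.ofReal (V (s + 1) j ω)
                * G (s + 1) (X (s + 1) j ω) ∂P :=
          fun i => P3 (s + 1) h1s hsr i (G (s + 1)) (hGmeas (s + 1)) (C (s + 1))
            (hCmeasF (s + 1) h1s hsr1)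
        have hc : ∀ ω : Ω, C (s + 1) ω * ∑ j, ENNReal.ofReal (V (s + 1) j ω)
              * G (s + 1) (X (s + 1) j ω)
            = (M : ℝ≥0∞)⁻¹ * ∑ j, C s ω * (∫⁻ y, g y * ∏ n ∈ Finset.Ioc (τ s) N,
                ENNReal.ofReal (α n y) ∂(κ (τ (s + 1)) (X (s + 1) j ω))) := by
          intro ω
          have hCsucc : C (s + 1) ω = C s ω * ENNReal.ofReal (vbar (s + 1) ω) := by
            simp only [hCdef]
            exact Finset.prod_Icc_succ_top (by omega) _
          have hb0 : ENNReal.ofReal (vbar (s + 1) ω) ≠ 0 :=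
            (ENNReal.ofReal_pos.mpr (hvbarpos (s + 1) h1s hsr1 ω)).ne'
          have hbt : ENNReal.ofReal (vbar (s + 1) ω) ≠ ⊤ := ENNReal.ofReal_ne_top
          have hoV : ∀ j : Fin M, ENNReal.ofReal (V (s + 1) j ω)
              = ENNReal.ofReal (v (s + 1) j ω)
                * ((M : ℝ≥0∞)⁻¹ * (ENNReal.ofReal (vbar (s + 1) ω))⁻¹) := by
            intro j
            rw [hV (s + 1) h1s hsr1 j ω, ENNReal.ofReal_div_of_pos
              (mul_pos hMpos (hvbarpos (s + 1) h1s hsr1 ω)), div_eq_mul_inv,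
              ENNReal.ofReal_mul (le_of_lt hMpos), ENNReal.ofReal_natCast,
              ENNReal.mul_inv (Or.inl hMennz) (Or.inl hMenntop)]
          have hov : ∀ j : Fin M, ENNReal.ofReal (v (s + 1) j ω)
              * G (s + 1) (X (s + 1) j ω)
              = ∫⁻ y, g y * ∏ n ∈ Finset.Ioc (τ s) N, ENNReal.ofReal (α n y)
                  ∂(κ (τ (s + 1)) (X (s + 1) j ω)) := by
            intro j
            have hv' : ENNReal.ofReal (v (s + 1) j ω)
                = ∏ n ∈ Finset.Ioc (τ s) (τ (s + 1)),
                    ENNReal.ofReal (α n (X (s + 1) j ω)) := by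
              rw [hv (s + 1) h1s hsr1 j ω,
                ENNReal.ofReal_prod_of_nonneg fun n _ => (hαpos n _).le]
              congr 1
              simp only [Nat.add_sub_cancel]
              exact Finset.Icc_add_one_left_eq_Ioc _ _
            rw [hv', hovG s hsr1 (X (s + 1) j ω)]
          calc C (s + 1) ω * ∑ j, ENNReal.ofReal (V (s + 1) j ω)
                * G (s + 1) (X (s + 1) j ω)
              = ∑ j, (C s ω * ENNReal.ofReal (vbar (s + 1) ω))
                  * (ENNReal.ofReal (V (s + 1) j ω) * G (s + 1) (X (s + 1) j ω)) := by
                rw [hCsucc, Finset.mul_sum]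
            _ = ∑ j, (M : ℝ≥0∞)⁻¹ * (C s ω
                  * (ENNReal.ofReal (v (s + 1) j ω) * G (s + 1) (X (s + 1) j ω))) := by
                refine Finset.sum_congr rfl fun j _ => ?_
                rw [hoV j]
                have hring : (C s ω * ENNReal.ofReal (vbar (s + 1) ω))
                    * (ENNReal.ofReal (v (s + 1) j ω)
                      * ((M : ℝ≥0∞)⁻¹ * (ENNReal.ofReal (vbar (s + 1) ω))⁻¹)
                      * G (s + 1) (X (s + 1) j ω))
                    = (ENNReal.ofReal (vbar (s + 1) ω)
                        * (ENNReal.ofReal (vbar (s + 1) ω))⁻¹)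
                      * ((M : ℝ≥0∞)⁻¹ * (C s ω * (ENNReal.ofReal (v (s + 1) j ω)
                        * G (s + 1) (X (s + 1) j ω)))) := by ring
                rw [hring, ENNReal.mul_inv_cancel hb0 hbt, one_mul]
            _ = (M : ℝ≥0∞)⁻¹ * ∑ j, C s ω * (∫⁻ y, g y * ∏ n ∈ Finset.Ioc (τ s) N,
                  ENNReal.ofReal (α n y) ∂(κ (τ (s + 1)) (X (s + 1) j ω))) := by
                rw [← Finset.mul_sum]
                exact congrArg _ (Finset.sum_congr rfl fun j _ => by rw [hov j])
        have hXm' : ∀ j : Fin M, Measurable (X (s + 1) j) :=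
          fun j => hXm (s + 1) h1s (by omega) j
        have hmeasj : ∀ j : Fin M, Measurable fun ω => C s ω
            * (∫⁻ y, g y * ∏ n ∈ Finset.Ioc (τ s) N,
              ENNReal.ofReal (α n y) ∂(κ (τ (s + 1)) (X (s + 1) j ω))) :=
          fun j => (hCm s (by omega)).mul ((hKmeas (τ s) (τ (s + 1))).comp (hXm' j))
        calc ∑ i, ∫⁻ ω, C (s + 1) ω * G (s + 1) (X (s + 1 + 1) i ω) ∂P
            = ∑ _i : Fin M, ∫⁻ ω, C (s + 1) ω * ∑ j, ENNReal.ofReal (V (s + 1) j ω)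
                * G (s + 1) (X (s + 1) j ω) ∂P := by
              refine Finset.sum_congr rfl fun i _ => ?_
              rw [ha i, hb i]
          _ = ∑ _i : Fin M, ((M : ℝ≥0∞)⁻¹ * ∫⁻ ω, ∑ j, C s ω
                * (∫⁻ y, g y * ∏ n ∈ Finset.Ioc (τ s) N,
                  ENNReal.ofReal (α n y) ∂(κ (τ (s + 1)) (X (s + 1) j ω))) ∂P) := by
              refine Finset.sum_congr rfl fun i _ => ?_
              rw [← lintegral_const_mul _ (Finset.measurable_sum _ fun j _ => hmeasj j)]
              exact lintegral_congr fun ω => hc ω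
          _ = (M : ℝ≥0∞) * ((M : ℝ≥0∞)⁻¹ * ∫⁻ ω, ∑ j, C s ω
                * (∫⁻ y, g y * ∏ n ∈ Finset.Ioc (τ s) N,
                  ENNReal.ofReal (α n y) ∂(κ (τ (s + 1)) (X (s + 1) j ω))) ∂P) := by
              rw [Finset.sum_const, Finset.card_univ, Fintype.card_fin, nsmul_eq_mul]
          _ = ∫⁻ ω, ∑ j, C s ω * (∫⁻ y, g y * ∏ n ∈ Finset.Ioc (τ s) N,
                ENNReal.ofReal (α n y) ∂(κ (τ (s + 1)) (X (s + 1) j ω))) ∂P := by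
              rw [← mul_assoc, ENNReal.mul_inv_cancel hMennz hMenntop, one_mul]
          _ = ∑ j, ∫⁻ ω, C s ω * (∫⁻ y, g y * ∏ n ∈ Finset.Ioc (τ s) N,
                ENNReal.ofReal (α n y) ∂(κ (τ (s + 1)) (X (s + 1) j ω))) ∂P :=
              lintegral_finset_sum _ fun j _ => hmeasj j
      have hclaim : ∀ s, 1 ≤ s → s ≤ r →
          (∑ i, ∫⁻ ω, C s ω * G s (X (s + 1) i ω) ∂P)
            = M * ∫⁻ y, g y * ∏ n ∈ Finset.Ioc 0 N, ENNReal.ofReal (α n y) ∂Q := by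
        intro s hs1
        induction s, hs1 using Nat.le_induction with
        | base =>
          intro _
          have h0 := hred 0 hrpos
          simp only [Nat.zero_add] at h0
          rw [hτ0] at h0
          have hC0 : ∀ ω : Ω, C 0 ω = 1 := fun ω => by
            simp only [hCdef]
            rw [Finset.Icc_eq_empty (by omega), Finset.prod_empty]
          calc (∑ i, ∫⁻ ω, C 1 ω * G 1 (X (1 + 1) i ω) ∂P)
              = ∑ j, ∫⁻ ω, C 0 ω * (∫⁻ y, g y * ∏ n ∈ Finset.Ioc 0 N,
                  ENNReal.ofReal (α n y) ∂(κ (τ 1) (X 1 j ω))) ∂P := h0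
            _ = ∑ j : Fin M, ∫⁻ ω, (fun x => ∫⁻ y, g y * ∏ n ∈ Finset.Ioc 0 N,
                  ENNReal.ofReal (α n y) ∂(κ (τ 1) x)) (X 1 j ω) ∂P := by
                refine Finset.sum_congr rfl fun j _ => lintegral_congr fun ω => ?_
                rw [hC0, one_mul]
            _ = ∑ _j : Fin M, ∫⁻ x, ∫⁻ y, g y * ∏ n ∈ Finset.Ioc 0 N,
                  ENNReal.ofReal (α n y) ∂(κ (τ 1) x) ∂Q :=
                Finset.sum_congr rfl fun j _ => P1 _ (hKmeas 0 (τ 1)) j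
            _ = ∑ _j : Fin M, ∫⁻ y, g y * ∏ n ∈ Finset.Ioc 0 N,
                  ENNReal.ofReal (α n y) ∂Q :=
                Finset.sum_congr rfl fun j _ => hbindQ (τ 1) 0 (hτleN 1 (by omega))
            _ = M * ∫⁻ y, g y * ∏ n ∈ Finset.Ioc 0 N, ENNReal.ofReal (α n y) ∂Q := by
                rw [Finset.sum_const, Finset.card_univ, Fintype.card_fin, nsmul_eq_mul]
        | succ s hs ih =>
          intro hs2
          have h0 := hred s (by omega)
          have hib : ∀ (j : Fin M) (ω : Ω), (∫⁻ x, ∫⁻ y, g y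
              * ∏ n ∈ Finset.Ioc (τ s) N, ENNReal.ofReal (α n y)
              ∂(κ (τ (s + 1)) x) ∂(κ (τ s) (Xbar s j ω)))
              = G s (Xbar s j ω) := by
            intro j ω
            simp only [hGdef]
            exact hbind (τ s) (τ (s + 1)) (τ s) (hτmono' s (s + 1) (by omega) (by omega))
              (hτleN (s + 1) (by omega)) _
          calc (∑ i, ∫⁻ ω, C (s + 1) ω * G (s + 1) (X (s + 1 + 1) i ω) ∂P)
              = ∑ j, ∫⁻ ω, C s ω * (∫⁻ y, g y * ∏ n ∈ Finset.Ioc (τ s) N,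
                  ENNReal.ofReal (α n y) ∂(κ (τ (s + 1)) (X (s + 1) j ω))) ∂P := h0
            _ = ∑ j : Fin M, ∫⁻ ω, C s ω * (∫⁻ x, ∫⁻ y, g y
                  * ∏ n ∈ Finset.Ioc (τ s) N, ENNReal.ofReal (α n y)
                  ∂(κ (τ (s + 1)) x) ∂(κ (τ s) (Xbar s j ω))) ∂P :=
                Finset.sum_congr rfl fun j _ => P2 s hs (by omega) j
                  (fun x => ∫⁻ y, g y * ∏ n ∈ Finset.Ioc (τ s) N,
                    ENNReal.ofReal (α n y) ∂(κ (τ (s + 1)) x))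
                  (hKmeas (τ s) (τ (s + 1))) (C s)
                  (fun _ hu => h𝓕mono (by omega : 2 * s - 1 ≤ 2 * s) _
                    (hCmeasF s hs (by omega) hu))
            _ = ∑ j : Fin M, ∫⁻ ω, C s ω * G s (X (s + 1) j ω) ∂P := by
                refine Finset.sum_congr rfl fun j _ => lintegral_congr fun ω => ?_
                rw [hib j ω, hGbar s hs (by omega) j ω]
            _ = M * ∫⁻ y, g y * ∏ n ∈ Finset.Ioc 0 N, ENNReal.ofReal (α n y) ∂Q :=
                ih (by omega)
      calc (∑ i, ∫⁻ ω, (g (X (r + 1) i ω)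
            * ∏ n ∈ Finset.Icc 1 N, ENNReal.ofReal (α n (X (r + 1) i ω)))
            * ENNReal.ofReal (H r i ω) ∂P)
          = ∑ i, ∫⁻ ω, C r ω * G r (X (r + 1) i ω) ∂P := hstepT
        _ = M * ∫⁻ y, g y * ∏ n ∈ Finset.Ioc 0 N, ENNReal.ofReal (α n y) ∂Q :=
            hclaim r hrpos le_rfl
        _ = M * ∫⁻ y, g y * ∏ n ∈ Finset.Icc 1 N, ENNReal.ofReal (α n y) ∂Q := by
            rw [hIcc1 N]
    -- final assembly
  have hXr1m : ∀ i : Fin M, Measurable (X (r + 1) i) := hXm (r + 1) (by omega) le_rfl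
  have hHm : ∀ i : Fin M, Measurable (H r i) := by
    intro i
    rcases Nat.eq_zero_or_pos r with hr0 | hrpos
    · subst hr0
      have hrw : H 0 i = fun _ => (1 : ℝ) := funext fun ω => hH0 i ω
      rw [hrw]; exact measurable_const
    · have hrw : H r i = fun ω => (∏ t ∈ Finset.Icc 1 r, vbar t ω)
          / ∏ n ∈ Finset.Icc 1 (τ r), α n (Xbar r i ω) :=
        funext fun ω => hH r hrpos le_rfl i ω
      rw [hrw]
      exact (Finset.measurable_prod _ fun t ht => (fun _ hu => h𝓕le _ _
          (hvbarmeasF t (Finset.mem_Icc.mp ht).1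
            (by have := (Finset.mem_Icc.mp ht).2; omega) hu))).div
        (Finset.measurable_prod _ fun n _ => (hαmeas n).comp (hXbarm r hrpos le_rfl i))
  have hHnn : ∀ (i : Fin M) (ω : Ω), 0 ≤ H r i ω := by
    intro i ω
    rcases Nat.eq_zero_or_pos r with hr0 | hrpos
    · subst hr0; rw [hH0 i ω]; norm_num
    · rw [hH r hrpos le_rfl i ω]
      exact div_nonneg (Finset.prod_nonneg fun t ht => (hvbarpos t
        (Finset.mem_Icc.mp ht).1 (by have := (Finset.mem_Icc.mp ht).2; omega) ω).le)
        (Finset.prod_nonneg fun n _ => (hαpos n _).le)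
  set ψp : (ℕ → 𝒳) → ℝ := fun x => max (ψ x) 0 with hψpdef
  set ψm : (ℕ → 𝒳) → ℝ := fun x => max (-ψ x) 0 with hψmdef
  have hψpmeas : Measurable ψp := hψmeas.max measurable_const
  have hψmmeas : Measurable ψm := hψmeas.neg.max measurable_const
  have hψpnn : ∀ x, 0 ≤ ψp x := fun x => le_max_right _ _
  have hψmnn : ∀ x, 0 ≤ ψm x := fun x => le_max_right _ _
  have hψsplit : ∀ x, ψp x - ψm x = ψ x := by
    intro x
    simp only [hψpdef, hψmdef]
    rcases le_total 0 (ψ x) with h | h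
    · rw [max_eq_left h, max_eq_right (by linarith)]; ring
    · rw [max_eq_right h, max_eq_left (by linarith)]; ring
  have hψple : ∀ x, |ψp x| ≤ |ψ x| := fun x => by
    rw [abs_of_nonneg (hψpnn x)]
    simp only [hψpdef]
    rcases le_total 0 (ψ x) with h | h
    · rw [max_eq_left h]; exact le_abs_self _
    · rw [max_eq_right h]; exact abs_nonneg _
  have hψmle : ∀ x, |ψm x| ≤ |ψ x| := fun x => by
    rw [abs_of_nonneg (hψmnn x)]
    simp only [hψmdef]
    rcases le_total 0 (-ψ x) with h | h
    · rw [max_eq_left h]; exact neg_le_abs _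
    · rw [max_eq_right h]; exact abs_nonneg _
  have hprodmeas : Measurable fun y => ∏ n ∈ Finset.Icc 1 N, α n y :=
    Finset.measurable_prod _ fun n _ => hαmeas n
  have hprodint : Integrable (fun y => ψ y * ∏ n ∈ Finset.Icc 1 N, α n y) Q := by
    have hrw : (fun y => ψ y * ∏ n ∈ Finset.Icc 1 N, α n y)
        = fun y => ZN * (ψ y * L y) := by
      funext y; rw [hL y]; field_simp
    rw [hrw]
    exact hψLint.const_mul ZN
  have hψpint : Integrable (fun y => ψp y * ∏ n ∈ Finset.Icc 1 N, α n y) Q := by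
    refine hprodint.abs.mono' (hψpmeas.mul hprodmeas).aestronglyMeasurable
      (Filter.Eventually.of_forall fun y => ?_)
    rw [Real.norm_eq_abs, abs_mul, abs_mul]
    exact mul_le_mul_of_nonneg_right (hψple y) (abs_nonneg _)
  have hψmint : Integrable (fun y => ψm y * ∏ n ∈ Finset.Icc 1 N, α n y) Q := by
    refine hprodint.abs.mono' (hψmmeas.mul hprodmeas).aestronglyMeasurable
      (Filter.Eventually.of_forall fun y => ?_)
    rw [Real.norm_eq_abs, abs_mul, abs_mul]
    exact mul_le_mul_of_nonneg_right (hψmle y) (abs_nonneg _)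
  set up : Ω → ℝ := fun ω => (1 / M : ℝ) * ∑ i, (∏ n ∈ Finset.Icc 1 N,
    α n (X (r + 1) i ω)) * ψp (X (r + 1) i ω) * H r i ω with hupdef
  set um : Ω → ℝ := fun ω => (1 / M : ℝ) * ∑ i, (∏ n ∈ Finset.Icc 1 N,
    α n (X (r + 1) i ω)) * ψm (X (r + 1) i ω) * H r i ω with humdef
  have hupmeas : Measurable up := by
    simp only [hupdef]
    exact (Finset.measurable_sum _ fun i _ => ((hprodmeas.comp (hXr1m i)).mul
      (hψpmeas.comp (hXr1m i))).mul (hHm i)).const_mul _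
  have hummeas : Measurable um := by
    simp only [humdef]
    exact (Finset.measurable_sum _ fun i _ => ((hprodmeas.comp (hXr1m i)).mul
      (hψmmeas.comp (hXr1m i))).mul (hHm i)).const_mul _
  have hupnn : ∀ ω, 0 ≤ up ω := by
    intro ω
    simp only [hupdef]
    refine mul_nonneg (by positivity) (Finset.sum_nonneg fun i _ => ?_)
    exact mul_nonneg (mul_nonneg (Finset.prod_nonneg fun n _ => (hαpos n _).le)
      (hψpnn _)) (hHnn i ω)
  have humnn : ∀ ω, 0 ≤ um ω := by
    intro ω
    simp only [humdef]
    refine mul_nonneg (by positivity) (Finset.sum_nonneg fun i _ => ?_)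
    exact mul_nonneg (mul_nonneg (Finset.prod_nonneg fun n _ => (hαpos n _).le)
      (hψmnn _)) (hHnn i ω)
  have hoM : ENNReal.ofReal (1 / (M : ℝ)) = ((M : ℝ≥0∞))⁻¹ := by
    rw [one_div, ENNReal.ofReal_inv_of_pos hMpos, ENNReal.ofReal_natCast]
  have hkey : ∀ (φ : (ℕ → 𝒳) → ℝ), Measurable φ → (∀ x, 0 ≤ φ x) →
      Integrable (fun y => φ y * ∏ n ∈ Finset.Icc 1 N, α n y) Q →
      ∫⁻ ω, ENNReal.ofReal ((1 / M : ℝ) * ∑ i, (∏ n ∈ Finset.Icc 1 N,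
          α n (X (r + 1) i ω)) * φ (X (r + 1) i ω) * H r i ω) ∂P
        = ENNReal.ofReal (∫ y, φ y * ∏ n ∈ Finset.Icc 1 N, α n y ∂Q) := by
    intro φ hφmeas hφnn hφint
    have hofF : ∀ (i : Fin M) (ω : Ω), ENNReal.ofReal ((∏ n ∈ Finset.Icc 1 N,
        α n (X (r + 1) i ω)) * φ (X (r + 1) i ω) * H r i ω)
        = (ENNReal.ofReal (φ (X (r + 1) i ω)) * ∏ n ∈ Finset.Icc 1 N,
          ENNReal.ofReal (α n (X (r + 1) i ω))) * ENNReal.ofReal (H r i ω) := by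
      intro i ω
      rw [ENNReal.ofReal_mul (mul_nonneg (Finset.prod_nonneg fun n _ => (hαpos n _).le)
        (hφnn _)), ENNReal.ofReal_mul (Finset.prod_nonneg fun n _ => (hαpos n _).le),
        ENNReal.ofReal_prod_of_nonneg fun n _ => (hαpos n _).le]
      ring
    have hFmeas : ∀ i : Fin M, Measurable fun ω => ENNReal.ofReal
        ((∏ n ∈ Finset.Icc 1 N, α n (X (r + 1) i ω)) * φ (X (r + 1) i ω) * H r i ω) :=
      fun i => ENNReal.measurable_ofReal.comp (((hprodmeas.comp (hXr1m i)).mul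
        ((hφmeas.comp (hXr1m i)))).mul (hHm i))
    calc ∫⁻ ω, ENNReal.ofReal ((1 / M : ℝ) * ∑ i, (∏ n ∈ Finset.Icc 1 N,
          α n (X (r + 1) i ω)) * φ (X (r + 1) i ω) * H r i ω) ∂P
        = ∫⁻ ω, ENNReal.ofReal (1 / (M : ℝ)) * ∑ i, ENNReal.ofReal
            ((∏ n ∈ Finset.Icc 1 N, α n (X (r + 1) i ω)) * φ (X (r + 1) i ω)
              * H r i ω) ∂P := by
          refine lintegral_congr fun ω => ?_
          rw [ENNReal.ofReal_mul (by positivity), ENNReal.ofReal_sum_of_nonneg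
            fun i _ => mul_nonneg (mul_nonneg (Finset.prod_nonneg fun n _ =>
              (hαpos n _).le) (hφnn _)) (hHnn i ω)]
      _ = ENNReal.ofReal (1 / (M : ℝ)) * ∑ i, ∫⁻ ω, ENNReal.ofReal
            ((∏ n ∈ Finset.Icc 1 N, α n (X (r + 1) i ω)) * φ (X (r + 1) i ω)
              * H r i ω) ∂P := by
          rw [lintegral_const_mul _ (Finset.measurable_sum _ fun i _ => hFmeas i),
            lintegral_finset_sum _ fun i _ => hFmeas i]
      _ = ENNReal.ofReal (1 / (M : ℝ)) * ∑ i, ∫⁻ ω, (ENNReal.ofReal (φ (X (r + 1) i ω))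
            * ∏ n ∈ Finset.Icc 1 N, ENNReal.ofReal (α n (X (r + 1) i ω)))
            * ENNReal.ofReal (H r i ω) ∂P := by
          congr 1
          exact Finset.sum_congr rfl fun i _ => lintegral_congr fun ω => hofF i ω
      _ = ENNReal.ofReal (1 / (M : ℝ)) * ((M : ℝ≥0∞) * ∫⁻ y, ENNReal.ofReal (φ y)
            * ∏ n ∈ Finset.Icc 1 N, ENNReal.ofReal (α n y) ∂Q) := by
          rw [master (fun y => ENNReal.ofReal (φ y))
            (ENNReal.measurable_ofReal.comp hφmeas)]
      _ = ∫⁻ y, ENNReal.ofReal (φ y) * ∏ n ∈ Finset.Icc 1 N,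
            ENNReal.ofReal (α n y) ∂Q := by
          rw [hoM, ← mul_assoc, ENNReal.inv_mul_cancel hMennz hMenntop, one_mul]
      _ = ∫⁻ y, ENNReal.ofReal (φ y * ∏ n ∈ Finset.Icc 1 N, α n y) ∂Q := by
          refine lintegral_congr fun y => ?_
          rw [ENNReal.ofReal_mul (hφnn y),
            ENNReal.ofReal_prod_of_nonneg fun n _ => (hαpos n _).le]
      _ = ENNReal.ofReal (∫ y, φ y * ∏ n ∈ Finset.Icc 1 N, α n y ∂Q) :=
          (ofReal_integral_eq_lintegral_ofReal hφint (Filter.Eventually.of_forall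
            fun y => mul_nonneg (hφnn y) (Finset.prod_nonneg fun n _ =>
              (hαpos n _).le))).symm
  have hup := hkey ψp hψpmeas hψpnn hψpint
  have hum := hkey ψm hψmmeas hψmnn hψmint
  have hupint : Integrable up P := by
    refine ⟨hupmeas.aestronglyMeasurable, ?_⟩
    rw [hasFiniteIntegral_iff_ofReal (Filter.Eventually.of_forall hupnn)]
    rw [show (fun ω => ENNReal.ofReal (up ω)) = fun ω => ENNReal.ofReal (up ω) from rfl]
    simp only [hupdef]
    rw [hup]
    exact ENNReal.ofReal_lt_top
  have humint : Integrable um P := by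
    refine ⟨hummeas.aestronglyMeasurable, ?_⟩
    rw [hasFiniteIntegral_iff_ofReal (Filter.Eventually.of_forall humnn)]
    simp only [humdef]
    rw [hum]
    exact ENNReal.ofReal_lt_top
  have hupval : ∫ ω, up ω ∂P = ∫ y, ψp y * ∏ n ∈ Finset.Icc 1 N, α n y ∂Q := by
    rw [integral_eq_lintegral_of_nonneg_ae (Filter.Eventually.of_forall hupnn)
      hupmeas.aestronglyMeasurable]
    simp only [hupdef]
    rw [hup, ENNReal.toReal_ofReal (integral_nonneg fun y => mul_nonneg (hψpnn y)
      (Finset.prod_nonneg fun n _ => (hαpos n _).le))]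
  have humval : ∫ ω, um ω ∂P = ∫ y, ψm y * ∏ n ∈ Finset.Icc 1 N, α n y ∂Q := by
    rw [integral_eq_lintegral_of_nonneg_ae (Filter.Eventually.of_forall humnn)
      hummeas.aestronglyMeasurable]
    simp only [humdef]
    rw [hum, ENNReal.toReal_ofReal (integral_nonneg fun y => mul_nonneg (hψmnn y)
      (Finset.prod_nonneg fun n _ => (hαpos n _).le))]
  have hψtileq : ∀ ω, ψtil ω = (up ω - um ω) / ZN := by
    intro ω
    rw [hψtil ω]
    simp only [hupdef, humdef]
    have hterm : ∀ i : Fin M, L (X (r + 1) i ω) * ψ (X (r + 1) i ω) * H r i ω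
        = ((∏ n ∈ Finset.Icc 1 N, α n (X (r + 1) i ω)) * ψp (X (r + 1) i ω) * H r i ω
          - (∏ n ∈ Finset.Icc 1 N, α n (X (r + 1) i ω)) * ψm (X (r + 1) i ω)
            * H r i ω) / ZN := by
      intro i
      rw [hL (X (r + 1) i ω), ← hψsplit (X (r + 1) i ω)]
      field_simp
    rw [Finset.sum_congr rfl fun i _ => hterm i, ← Finset.sum_div,
      Finset.sum_sub_distrib]
    ring
  calc ∫ ω, ψtil ω ∂P
      = ∫ ω, (up ω - um ω) / ZN ∂P := integral_congr_ae
        (Filter.Eventually.of_forall fun ω => hψtileq ω)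
    _ = (∫ ω, up ω - um ω ∂P) / ZN := integral_div ZN _
    _ = (∫ ω, up ω ∂P - ∫ ω, um ω ∂P) / ZN := by rw [integral_sub hupint humint]
    _ = (∫ y, ψ y * ∏ n ∈ Finset.Icc 1 N, α n y ∂Q) / ZN := by
        rw [hupval, humval, ← integral_sub hψpint hψmint]
        congr 1
        refine integral_congr_ae (Filter.Eventually.of_forall fun y => ?_)
        dsimp only
        rw [← hψsplit y]
        ring
    _ = ψN := by
        rw [hψN, ← integral_div]
        refine integral_congr_ae (Filter.Eventually.of_forall fun y => ?_)
        dsimp only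
        rw [hL y]
        ring
end

section
/- Under the hypotheses of the unbiasedness Proposition (an SMC particle system with M particles, strictly positive incremental weights α_n, multinomial resampling at fixed times τ_1 < ⋯ < τ_r with resampling probabilities V_{τ_s}^{(j)} proportional to the accumulated incremental weights since the previous resampling, conditionally independent propagation according to the proposal kernels between resampling times, and ψ(X_{1:N}) L_N(X_{1:N}) integrable), the SMC estimator satisfies E[Z_N^M · ψ̂_OR] = Z_N · ψ_N, where Z_N^M = ∏_{s=1}^{r+1} v̄_{τ_s} is the SMC estimate of the normalizing constant, ψ̂_OR = ∑_{i=1}^{M} V_{τ_{r+1}}^{(i)} ψ(X_{1:N}^{(i)}) is the weighted particle estimate of ψ_N, Z_N = ∫ γ_N is the true normalizing constant, and ψ_N = E_{π_N}[ψ(X_{1:N})]. -/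
open MeasureTheory ProbabilityTheory
open scoped ENNReal


namespace SMCaux

lemma sum_pi_prod {M : ℕ} [NeZero M] (i : Fin M) (c V : Fin M → ℝ) (hV : ∑ j, V j = 1) :
    ∑ js : Fin M → Fin M, c (js i) * ∏ i', V (js i') = ∑ j, c j * V j := by
  have key : ∀ js : Fin M → Fin M,
      ∏ i', (if i' = i then c (js i') * V (js i') else V (js i')) = c (js i) * ∏ i', V (js i') := by
    intro js
    calc ∏ i', (if i' = i then c (js i') * V (js i') else V (js i'))
        = (c (js i) * V (js i)) * ∏ i' ∈ Finset.univ.erase i, V (js i') := by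
          rw [← Finset.mul_prod_erase Finset.univ _ (Finset.mem_univ i), if_pos rfl]
          exact congrArg _ (Finset.prod_congr rfl fun j hj => if_neg (Finset.ne_of_mem_erase hj))
      _ = c (js i) * ∏ i', V (js i') := by
          rw [mul_assoc, Finset.mul_prod_erase Finset.univ (fun i' => V (js i')) (Finset.mem_univ i)]
  calc ∑ js : Fin M → Fin M, c (js i) * ∏ i', V (js i')
      = ∑ js : Fin M → Fin M, ∏ i', (if i' = i then c (js i') * V (js i') else V (js i')) :=
        (Finset.sum_congr rfl fun js _ => key js).symm
    _ = ∏ i', ∑ j, (if i' = i then c j * V j else V j) :=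
        (Fintype.prod_sum (κ := fun _ : Fin M => Fin M)
          (f := fun i' j => if i' = i then c j * V j else V j)).symm
    _ = ∑ j, c j * V j := by
        rw [← Finset.mul_prod_erase Finset.univ _ (Finset.mem_univ i)]
        simp only [if_pos rfl]
        have h2 : ∀ j ∈ Finset.univ.erase i,
            (∑ j' : Fin M, if j = i then c j' * V j' else V j') = 1 := by
          intro j hj
          simp only [if_neg (Finset.ne_of_mem_erase hj)]
          exact hV
        rw [Finset.prod_congr rfl h2]
        simp

lemma iSup_min_nat (a : ℝ≥0∞) : (⨆ k : ℕ, a ⊓ (k : ℝ≥0∞)) = a := by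
  refine le_antisymm (iSup_le fun k => min_le_left _ _) ?_
  by_cases h : a = ⊤
  · subst h
    simp only [top_inf_eq]
    rw [top_le_iff, iSup_eq_top]
    intro b hb
    obtain ⟨n, hn⟩ := ENNReal.exists_nat_gt hb.ne
    exact ⟨n, hn⟩
  · obtain ⟨n, hn⟩ := ENNReal.exists_nat_gt h
    exact le_iSup_of_le n (by rw [min_eq_left hn.le])

lemma key_limit {Ω : Type*} [MeasurableSpace Ω] (μ : Measure Ω) (g : Ω → ℝ≥0∞)
    (φ : ℕ → Ω → ℝ≥0∞) (H : Ω → ℝ≥0∞)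
    (hg : Measurable g) (hφ : ∀ m, Measurable (φ m)) (hmono : ∀ ω, Monotone fun m => φ m ω)
    (hsup : ∀ ω, (⨆ m, φ m ω) = H ω) :
    (⨆ k : ℕ, ⨆ m : ℕ, ∫⁻ ω, (g ω ⊓ (k : ℝ≥0∞)) * φ m ω ∂μ) = ∫⁻ ω, g ω * H ω ∂μ := by
  have hgk : ∀ k : ℕ, Measurable fun ω => g ω ⊓ (k : ℝ≥0∞) := fun k => hg.min measurable_const
  have hH : Measurable H := by
    have : (fun ω => ⨆ m, φ m ω) = H := funext fun ω => hsup ω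
    rw [← this]
    exact Measurable.iSup hφ
  have h1 : ∀ k : ℕ, (⨆ m : ℕ, ∫⁻ ω, (g ω ⊓ (k : ℝ≥0∞)) * φ m ω ∂μ)
      = ∫⁻ ω, (g ω ⊓ (k : ℝ≥0∞)) * H ω ∂μ := by
    intro k
    rw [← lintegral_iSup (f := fun (m : ℕ) ω => (g ω ⊓ (k : ℝ≥0∞)) * φ m ω) (fun m => (hgk k).mul (hφ m))
      (fun m m' h ω => mul_le_mul_right (hmono ω h) _)]
    refine lintegral_congr fun ω => ?_
    rw [← ENNReal.mul_iSup, hsup]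
  simp only [h1]
  rw [← lintegral_iSup (f := fun (k : ℕ) ω => (g ω ⊓ (k : ℝ≥0∞)) * H ω) (fun k => (hgk k).mul hH)]
  · refine lintegral_congr fun ω => ?_
    rw [← ENNReal.iSup_mul, iSup_min_nat]
  · intro k k' h ω
    exact mul_le_mul_left (min_le_min le_rfl (Nat.cast_le.2 h)) _

end SMCaux


namespace SMCaux

lemma integrable_of_bounded {Ω : Type*} {mΩ : MeasurableSpace Ω} {μ : Measure Ω}
    [IsFiniteMeasure μ] {u : Ω → ℝ} (hu : AEStronglyMeasurable u μ) (C : ℝ)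
    (hC : ∀ ω, |u ω| ≤ C) : Integrable u μ :=
  ⟨hu, HasFiniteIntegral.of_bounded (C := C) (ae_of_all _ fun ω => by
    simpa [Real.norm_eq_abs] using hC ω)⟩

lemma integral_mul_eq {Ω : Type*} {m : MeasurableSpace Ω} [mΩ : MeasurableSpace Ω]
    (hm : m ≤ mΩ) (P : Measure Ω) [IsProbabilityMeasure P] {f g h : Ω → ℝ}
    (hf : StronglyMeasurable[m] f) (hg : Integrable g P) (hfg : Integrable (f * g) P)
    (hgh : P[g|m] =ᵐ[P] h) :
    ∫ ω, f ω * g ω ∂P = ∫ ω, f ω * h ω ∂P := by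
  have h1 : P[f * g|m] =ᵐ[P] f * P[g|m] := condExp_mul_of_stronglyMeasurable_left hf hfg hg
  have h2 := (integral_condExp (μ := P) (f := f * g) hm).symm
  calc ∫ ω, f ω * g ω ∂P = ∫ ω, (P[f * g|m]) ω ∂P := h2
    _ = ∫ ω, f ω * h ω ∂P := by
        refine integral_congr_ae (h1.trans ?_)
        filter_upwards [hgh] with ω hω
        simp [hω]

lemma lintegral_eq_of_integral_eq {Ω Ω' : Type*} {mΩ : MeasurableSpace Ω}
    {mΩ' : MeasurableSpace Ω'} {μ : Measure Ω} {ν : Measure Ω'} {u : Ω → ℝ} {w : Ω' → ℝ}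
    (hu : Integrable u μ) (hw : Integrable w ν) (hu0 : ∀ ω, 0 ≤ u ω) (hw0 : ∀ ω, 0 ≤ w ω)
    (huw : ∫ ω, u ω ∂μ = ∫ ω, w ω ∂ν) :
    ∫⁻ ω, ENNReal.ofReal (u ω) ∂μ = ∫⁻ ω, ENNReal.ofReal (w ω) ∂ν := by
  rw [← ofReal_integral_eq_lintegral_ofReal hu (ae_of_all _ hu0),
    ← ofReal_integral_eq_lintegral_ofReal hw (ae_of_all _ hw0), huw]

end SMCaux

namespace SMCaux

noncomputable def Hfun {𝒳 : Type*} [MeasurableSpace 𝒳] (κ : ℕ → Kernel (ℕ → 𝒳) (ℕ → 𝒳))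
    (α : ℕ → (ℕ → 𝒳) → ℝ) (τ : ℕ → ℕ) (r : ℕ) (Θ : (ℕ → 𝒳) → ℝ≥0∞) : ℕ → (ℕ → 𝒳) → ℝ≥0∞
  | 0 => Θ
  | (k+1) => fun x => ∫⁻ y, (∏ n ∈ Finset.Ioc (τ (r - k)) (τ (r - k + 1)), ENNReal.ofReal (α n y))
      * Hfun κ α τ r Θ k y ∂(κ (τ (r - k)) x)

lemma Hfun_zero {𝒳 : Type*} [MeasurableSpace 𝒳] (κ : ℕ → Kernel (ℕ → 𝒳) (ℕ → 𝒳))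
    (α : ℕ → (ℕ → 𝒳) → ℝ) (τ : ℕ → ℕ) (r : ℕ) (Θ : (ℕ → 𝒳) → ℝ≥0∞) :
    Hfun κ α τ r Θ 0 = Θ := rfl

lemma Hfun_succ {𝒳 : Type*} [MeasurableSpace 𝒳] (κ : ℕ → Kernel (ℕ → 𝒳) (ℕ → 𝒳))
    (α : ℕ → (ℕ → 𝒳) → ℝ) (τ : ℕ → ℕ) (r : ℕ) (Θ : (ℕ → 𝒳) → ℝ≥0∞) (k : ℕ) :
    Hfun κ α τ r Θ (k+1) = fun x => ∫⁻ y,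
      (∏ n ∈ Finset.Ioc (τ (r - k)) (τ (r - k + 1)), ENNReal.ofReal (α n y))
      * Hfun κ α τ r Θ k y ∂(κ (τ (r - k)) x) := rfl

lemma Hfun_measurable {𝒳 : Type*} [MeasurableSpace 𝒳] (κ : ℕ → Kernel (ℕ → 𝒳) (ℕ → 𝒳))
    [∀ n, IsMarkovKernel (κ n)] (α : ℕ → (ℕ → 𝒳) → ℝ) (hα : ∀ n, Measurable (α n))
    (τ : ℕ → ℕ) (r : ℕ) (Θ : (ℕ → 𝒳) → ℝ≥0∞) (hΘ : Measurable Θ) (k : ℕ) :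
    Measurable (Hfun κ α τ r Θ k) := by
  induction k with
  | zero => exact hΘ
  | succ k ih =>
    rw [Hfun_succ]
    exact Measurable.lintegral_kernel (κ := κ (τ (r - k)))
      ((Finset.measurable_prod _ fun n _ => ENNReal.measurable_ofReal.comp (hα n)).mul ih)

end SMCaux

/-- Unbiasedness Remark: under the hypotheses of the Proposition in the appendix,
`E[Z_N^M · ψ̂_OR] = Z_N · ψ_N`, where `Z_N^M = ∏_{s=1}^{r+1} v̄_{τ_s}` is the SMC
estimate of the normalizing constant and `ψ̂_OR = ∑_i V_{τ_{r+1}}^{(i)} ψ(X_{1:N}^{(i)})`. -/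
theorem smc_normalizing_constant_times_estimator_unbiased
    {𝒳 : Type*} [MeasurableSpace 𝒳]
    {Ω : Type*} {mΩ : MeasurableSpace Ω} (P : Measure Ω) [IsProbabilityMeasure P]
    (N M r : ℕ) (hM : 1 ≤ M) (hN : 1 ≤ N)
    (τ : ℕ → ℕ) (hτ0 : τ 0 = 0) (hτmono : ∀ s, s ≤ r → τ s < τ (s + 1))
    (hτN : τ (r + 1) = N)
    -- the proposal law `Q` on path space and its conditional kernels `κ n` given the
    -- first `n` coordinates (composition of the proposal kernels `q_{n+1}, q_{n+2}, …`)
    (Q : Measure (ℕ → 𝒳)) [IsProbabilityMeasure Q]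
    (κ : ℕ → Kernel (ℕ → 𝒳) (ℕ → 𝒳)) [∀ n, IsMarkovKernel (κ n)]
    (hκsupp : ∀ n x, (κ n x) {y | ∀ k, 1 ≤ k → k ≤ n → y k = x k} = 1)
    (hκloc : ∀ n x y, (∀ k, 1 ≤ k → k ≤ n → x k = y k) → κ n x = κ n y)
    (hκQ : ∀ n, n ≤ N → Q.bind (κ n) = Q)
    (hκcomp : ∀ m n, m ≤ n → n ≤ N → ∀ x, (κ m x).bind (κ n) = κ m x)
    -- strictly positive incremental weights
    (α : ℕ → (ℕ → 𝒳) → ℝ) (hαmeas : ∀ n, Measurable (α n))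
    (hαpos : ∀ n x, 0 < α n x)
    (hαloc : ∀ n x y, (∀ k, 1 ≤ k → k ≤ n → x k = y k) → α n x = α n y)
    -- normalizing constant and likelihood ratio `L_N = π_N / ∏ q_n = (∏ α_n) / Z_N`
    (ZN : ℝ) (hZNpos : 0 < ZN)
    (hZN : ∫ x, ∏ n ∈ Finset.Icc 1 N, α n x ∂Q = ZN)
    (L : (ℕ → 𝒳) → ℝ) (hL : ∀ x, L x = (∏ n ∈ Finset.Icc 1 N, α n x) / ZN)
    -- test function `ψ` with `ψ(X_{1:N}) L_N(X_{1:N})` integrable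
    (ψ : (ℕ → 𝒳) → ℝ) (hψmeas : Measurable ψ)
    (hψloc : ∀ x y, (∀ k, 1 ≤ k → k ≤ N → x k = y k) → ψ x = ψ y)
    (hψLint : Integrable (fun x => ψ x * L x) Q)
    (ψN : ℝ) (hψN : ψN = ∫ x, ψ x * L x ∂Q)
    -- the particle system: `X s i` is particle `i`'s path just before the `s`-th
    -- resampling, `Xbar s i` the path just after it; `𝓕` is the filtration
    (𝓕 : ℕ → MeasurableSpace Ω)
    (h𝓕le : ∀ k, 𝓕 k ≤ mΩ) (h𝓕mono : Monotone 𝓕)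
    (X Xbar : ℕ → Fin M → Ω → (ℕ → 𝒳))
    (hXmeas : ∀ s, 1 ≤ s → s ≤ r + 1 → ∀ i, Measurable[𝓕 (2 * s - 1)] (X s i))
    (hXbarmeas : ∀ s, 1 ≤ s → s ≤ r → ∀ i, Measurable[𝓕 (2 * s)] (Xbar s i))
    -- accumulated incremental weights and resampling probabilities
    (v : ℕ → Fin M → Ω → ℝ)
    (hv : ∀ s, 1 ≤ s → s ≤ r + 1 → ∀ i ω,
      v s i ω = ∏ n ∈ Finset.Icc (τ (s - 1) + 1) (τ s), α n (X s i ω))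
    (vbar : ℕ → Ω → ℝ)
    (hvbar : ∀ s, 1 ≤ s → s ≤ r + 1 → ∀ ω, vbar s ω = (∑ j, v s j ω) / M)
    (V : ℕ → Fin M → Ω → ℝ)
    (hV : ∀ s, 1 ≤ s → s ≤ r + 1 → ∀ i ω, V s i ω = v s i ω / (M * vbar s ω))
    -- (i) multinomial resampling: conditionally on `𝓕 (2s−1)` the resampled paths are
    -- i.i.d., each equal to `X s j` with probability `V s j`
    (I : ℕ → Fin M → Ω → Fin M)
    (hXbarI : ∀ s, 1 ≤ s → s ≤ r → ∀ i ω, Xbar s i ω = X s (I s i ω) ω)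
    (hresample : ∀ s, 1 ≤ s → s ≤ r → ∀ js : Fin M → Fin M,
      P[(fun ω => ({ω' | ∀ i, I s i ω' = js i} : Set Ω).indicator
          (fun _ => (1 : ℝ)) ω) | 𝓕 (2 * s - 1)]
        =ᵐ[P] fun ω => ∏ i, V s (js i) ω)
    -- (ii) conditionally independent propagation according to the proposal kernels,
    -- extending the resampled ancestors
    (hXext : ∀ s, 1 ≤ s → s ≤ r → ∀ i ω k, 1 ≤ k → k ≤ τ s →
      X (s + 1) i ω k = Xbar s i ω k)
    (hinit : ∀ f : Fin M → (ℕ → 𝒳) → ℝ,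
      (∀ i, Measurable (f i)) → (∀ i, ∃ C, ∀ x, |f i x| ≤ C) →
      ∫ ω, ∏ i, f i (X 1 i ω) ∂P = ∏ i : Fin M, ∫ y, f i y ∂Q)
    (hprop : ∀ s, 1 ≤ s → s ≤ r → ∀ f : Fin M → (ℕ → 𝒳) → ℝ,
      (∀ i, Measurable (f i)) → (∀ i, ∃ C, ∀ x, |f i x| ≤ C) →
      P[(fun ω => ∏ i, f i (X (s + 1) i ω)) | 𝓕 (2 * s)]
        =ᵐ[P] fun ω => ∏ i, ∫ y, f i y ∂(κ (τ s) (Xbar s i ω)))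
    -- the SMC normalizing-constant estimate and the weighted particle estimate
    (ZNM : Ω → ℝ)
    (hZNM : ∀ ω, ZNM ω = ∏ s ∈ Finset.Icc 1 (r + 1), vbar s ω)
    (ψhat : Ω → ℝ)
    (hψhat : ∀ ω, ψhat ω = ∑ i, V (r + 1) i ω * ψ (X (r + 1) i ω)) :
    ∫ ω, ZNM ω * ψhat ω ∂P = ZN * ψN := by
  classical
  haveI hMne : NeZero M := ⟨Nat.one_le_iff_ne_zero.mp hM⟩
  haveI : Nonempty (Fin M) := Fin.pos_iff_nonempty.mp (by omega)
  have hMR : (0:ℝ) < M := by exact_mod_cast Nat.pos_of_ne_zero hMne.out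
  have hM0 : (M:ℝ≥0∞) ≠ 0 := by exact_mod_cast Nat.cast_ne_zero.mpr hMne.out
  have hMt : (M:ℝ≥0∞) ≠ ⊤ := ENNReal.natCast_ne_top M
  have hτle : ∀ a b : ℕ, a ≤ b → b ≤ r + 1 → τ a ≤ τ b := by
    intro a b hab
    induction hab with
    | refl => intro _; exact le_rfl
    | @step m hm ih =>
      intro hbr
      exact le_trans (ih (by omega)) (le_of_lt (hτmono m (by omega)))
  have hτsN : ∀ s, s ≤ r + 1 → τ s ≤ N := fun s hs => hτN ▸ hτle s (r+1) hs le_rfl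
  have hvpos : ∀ s, 1 ≤ s → s ≤ r + 1 → ∀ i ω, 0 < v s i ω := by
    intro s h1 h2 i ω
    rw [hv s h1 h2 i ω]
    exact Finset.prod_pos fun n _ => hαpos n _
  have hvbarpos : ∀ s, 1 ≤ s → s ≤ r + 1 → ∀ ω, 0 < vbar s ω := by
    intro s h1 h2 ω
    rw [hvbar s h1 h2 ω]
    exact div_pos (Finset.sum_pos (fun j _ => hvpos s h1 h2 j ω) Finset.univ_nonempty) hMR
  have hVnonneg : ∀ s, 1 ≤ s → s ≤ r + 1 → ∀ i ω, 0 ≤ V s i ω := by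
    intro s h1 h2 i ω
    rw [hV s h1 h2 i ω]
    exact div_nonneg (hvpos s h1 h2 i ω).le (mul_nonneg hMR.le (hvbarpos s h1 h2 ω).le)
  have hsumV : ∀ s, 1 ≤ s → s ≤ r + 1 → ∀ ω, ∑ j, V s j ω = 1 := by
    intro s h1 h2 ω
    have hsum : 0 < ∑ j, v s j ω :=
      Finset.sum_pos (fun j _ => hvpos s h1 h2 j ω) Finset.univ_nonempty
    have : ∀ j : Fin M, V s j ω = v s j ω / (∑ j', v s j' ω) := by
      intro j
      rw [hV s h1 h2 j ω, hvbar s h1 h2 ω, mul_div_cancel₀ _ (ne_of_gt hMR)]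
    rw [Finset.sum_congr rfl fun j _ => this j, ← Finset.sum_div, div_self (ne_of_gt hsum)]
  have hvmeasF : ∀ s, 1 ≤ s → s ≤ r + 1 → ∀ i, Measurable[𝓕 (2*s-1)] (v s i) := by
    intro s h1 h2 i
    have he : v s i = fun ω => ∏ n ∈ Finset.Icc (τ (s-1)+1) (τ s), α n (X s i ω) :=
      funext (hv s h1 h2 i)
    rw [he]
    exact Finset.measurable_prod _ fun n _ => (hαmeas n).comp (hXmeas s h1 h2 i)
  have hvbarmeasF : ∀ s, 1 ≤ s → s ≤ r + 1 → Measurable[𝓕 (2*s-1)] (vbar s) := by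
    intro s h1 h2
    have he : vbar s = fun ω => (∑ j, v s j ω) / M := funext (hvbar s h1 h2)
    rw [he]
    exact (Finset.measurable_sum _ fun j _ => hvmeasF s h1 h2 j).div_const _
  have hVmeasF : ∀ s, 1 ≤ s → s ≤ r + 1 → ∀ i, Measurable[𝓕 (2*s-1)] (V s i) := by
    intro s h1 h2 i
    have he : V s i = fun ω => v s i ω / (M * vbar s ω) := funext (hV s h1 h2 i)
    rw [he]
    exact (hvmeasF s h1 h2 i).div (measurable_const.mul (hvbarmeasF s h1 h2))
  have hXm : ∀ s, 1 ≤ s → s ≤ r + 1 → ∀ i, Measurable (X s i) :=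
    fun s h1 h2 i => (hXmeas s h1 h2 i).mono (h𝓕le _) le_rfl
  have hXbarm : ∀ s, 1 ≤ s → s ≤ r → ∀ i, Measurable (Xbar s i) :=
    fun s h1 h2 i => (hXbarmeas s h1 h2 i).mono (h𝓕le _) le_rfl
  have hvm : ∀ s, 1 ≤ s → s ≤ r + 1 → ∀ i, Measurable (v s i) :=
    fun s h1 h2 i => (hvmeasF s h1 h2 i).mono (h𝓕le _) le_rfl
  have hvbarm : ∀ s, 1 ≤ s → s ≤ r + 1 → Measurable (vbar s) :=
    fun s h1 h2 => (hvbarmeasF s h1 h2).mono (h𝓕le _) le_rfl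
  have hVm : ∀ s, 1 ≤ s → s ≤ r + 1 → ∀ i, Measurable (V s i) :=
    fun s h1 h2 i => (hVmeasF s h1 h2 i).mono (h𝓕le _) le_rfl
  -- measurability of the weight products `W s`
  have hWmeasF : ∀ s, 1 ≤ s → s ≤ r + 1 →
      Measurable[𝓕 (2*s-1)] (fun ω => ∏ t ∈ Finset.Icc 1 s, ENNReal.ofReal (vbar t ω)) := by
    intro s h1 h2
    refine Finset.measurable_prod _ fun t ht => ?_
    have h1t : 1 ≤ t := (Finset.mem_Icc.mp ht).1
    have h2t : t ≤ s := (Finset.mem_Icc.mp ht).2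
    exact (ENNReal.measurable_ofReal.comp (hvbarmeasF t h1t (by omega))).mono
      (h𝓕mono (by omega)) le_rfl
  have hWm : ∀ s, s ≤ r + 1 →
      Measurable (fun ω => ∏ t ∈ Finset.Icc 1 s, ENNReal.ofReal (vbar t ω)) := by
    intro s hs
    refine Finset.measurable_prod _ fun t ht => ?_
    have hmem := Finset.mem_Icc.mp ht
    exact ENNReal.measurable_ofReal.comp (hvbarm t hmem.1 (by omega))
    -- Step A: propagation step
  have stepA : ∀ s, 1 ≤ s → s ≤ r → ∀ G : Ω → ℝ≥0∞, Measurable[𝓕 (2*s)] G →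
      ∀ F : (ℕ → 𝒳) → ℝ≥0∞, Measurable F → ∀ i,
      ∫⁻ ω, G ω * F (X (s+1) i ω) ∂P
        = ∫⁻ ω, G ω * ∫⁻ y, F y ∂(κ (τ s) (Xbar s i ω)) ∂P := by
    intro s hs1 hsr G hG F hF i
    have hGa : Measurable G := hG.mono (h𝓕le _) le_rfl
    have hXa : Measurable (X (s+1) i) := hXm (s+1) (by omega) (by omega) i
    have hXba : Measurable (Xbar s i) := hXbarm s hs1 hsr i
    set fm : ℕ → (ℕ → 𝒳) → ℝ := fun m y => (F y ⊓ (m:ℝ≥0∞)).toReal with hfmdef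
    set gk : ℕ → Ω → ℝ := fun k ω => (G ω ⊓ (k:ℝ≥0∞)).toReal with hgkdef
    have hfmmeas : ∀ m, Measurable (fm m) := fun m => (hF.min measurable_const).ennreal_toReal
    have hgkmeasF : ∀ k, Measurable[𝓕 (2*s)] (gk k) :=
      fun k => (hG.min measurable_const).ennreal_toReal
    have hgkmeas : ∀ k, Measurable (gk k) := fun k => (hgkmeasF k).mono (h𝓕le _) le_rfl
    have hfm0 : ∀ m y, 0 ≤ fm m y := fun m y => ENNReal.toReal_nonneg
    have hgk0 : ∀ k ω, 0 ≤ gk k ω := fun k ω => ENNReal.toReal_nonneg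
    have hfmb : ∀ (m : ℕ) y, |fm m y| ≤ m := by
      intro m y
      rw [abs_of_nonneg (hfm0 m y)]
      calc (F y ⊓ (m:ℝ≥0∞)).toReal ≤ ((m:ℝ≥0∞)).toReal :=
            ENNReal.toReal_mono (by simp) (min_le_right _ _)
        _ = m := by simp
    have hgkb : ∀ (k : ℕ) ω, |gk k ω| ≤ k := by
      intro k ω
      rw [abs_of_nonneg (hgk0 k ω)]
      calc (G ω ⊓ (k:ℝ≥0∞)).toReal ≤ ((k:ℝ≥0∞)).toReal :=
            ENNReal.toReal_mono (by simp) (min_le_right _ _)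
        _ = k := by simp
    have hfmne : ∀ (m : ℕ) y, F y ⊓ (m:ℝ≥0∞) ≠ ⊤ :=
      fun m y => ((min_le_right _ _).trans_lt (ENNReal.natCast_lt_top m)).ne
    have hgkne : ∀ (k : ℕ) ω, G ω ⊓ (k:ℝ≥0∞) ≠ ⊤ :=
      fun k ω => ((min_le_right _ _).trans_lt (ENNReal.natCast_lt_top k)).ne
    have hfmofReal : ∀ (m : ℕ) y, ENNReal.ofReal (fm m y) = F y ⊓ (m:ℝ≥0∞) :=
      fun m y => ENNReal.ofReal_toReal (hfmne m y)
    have hgkofReal : ∀ (k : ℕ) ω, ENNReal.ofReal (gk k ω) = G ω ⊓ (k:ℝ≥0∞) :=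
      fun k ω => ENNReal.ofReal_toReal (hgkne k ω)
    have hkifm : ∀ m : ℕ, ∀ x : ℕ → 𝒳, Integrable (fm m) (κ (τ s) x) := by
      intro m x
      exact SMCaux.integrable_of_bounded (hfmmeas m).aestronglyMeasurable m (hfmb m)
    have hkerSM : ∀ m : ℕ, StronglyMeasurable fun x => ∫ y, fm m y ∂(κ (τ s) x) :=
      fun m => MeasureTheory.StronglyMeasurable.integral_kernel_prod_right
        (κ := κ (τ s)) (f := fun _ y => fm m y)
        (((hfmmeas m).comp measurable_snd).stronglyMeasurable)
    have hkerb : ∀ (m : ℕ) x, |∫ y, fm m y ∂(κ (τ s) x)| ≤ m := by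
      intro m x
      have := norm_integral_le_of_norm_le_const (μ := κ (τ s) x) (f := fm m) (C := m)
        (ae_of_all _ fun y => by simpa [Real.norm_eq_abs] using hfmb m y)
      simpa [Real.norm_eq_abs, measure_univ] using this
    have hint1 : ∀ k m : ℕ, Integrable (fun ω => fm m (X (s+1) i ω)) P := by
      intro k m
      exact SMCaux.integrable_of_bounded ((hfmmeas m).comp hXa).aestronglyMeasurable m
        (fun ω => hfmb m _)
    have hint2 : ∀ k m : ℕ, Integrable (fun ω => gk k ω * fm m (X (s+1) i ω)) P := by
      intro k m
      refine SMCaux.integrable_of_bounded ((hgkmeas k).mul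
        ((hfmmeas m).comp hXa)).aestronglyMeasurable ((k:ℝ)*m) (fun ω => ?_)
      rw [abs_mul]
      exact mul_le_mul (hgkb k ω) (hfmb m _) (abs_nonneg _) (Nat.cast_nonneg k)
    have hreal : ∀ k m : ℕ, ∫ ω, gk k ω * fm m (X (s+1) i ω) ∂P
        = ∫ ω, gk k ω * (∫ y, fm m y ∂(κ (τ s) (Xbar s i ω))) ∂P := by
      intro k m
      have hcond := hprop s hs1 hsr (fun j => if j = i then fm m else fun _ => (1:ℝ))
        (fun j => by
          by_cases hj : j = i
          · simpa [hj] using hfmmeas m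
          · simp only [if_neg hj]; exact measurable_const)
        (fun j => by
          by_cases hj : j = i
          · exact ⟨m, by simpa [hj] using hfmb m⟩
          · exact ⟨1, by simp [hj]⟩)
      have e1 : (fun ω => ∏ j, (if j = i then fm m else fun _ => (1:ℝ)) (X (s+1) j ω))
          = fun ω => fm m (X (s+1) i ω) := by
        funext ω
        rw [Finset.prod_eq_single i (fun b _ hb => by simp [if_neg hb]) (by simp)]
        simp
      have e2 : (fun ω => ∏ j, ∫ y, (if j = i then fm m else fun _ => (1:ℝ)) y
          ∂(κ (τ s) (Xbar s j ω))) = fun ω => ∫ y, fm m y ∂(κ (τ s) (Xbar s i ω)) := by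
        funext ω
        rw [Finset.prod_eq_single i (fun b _ hb => by simp [if_neg hb]) (by simp)]
        simp
      rw [e1, e2] at hcond
      exact SMCaux.integral_mul_eq (h𝓕le (2*s)) P (hgkmeasF k).stronglyMeasurable
        (hint1 k m) (hint2 k m) hcond
    have hlin : ∀ k m : ℕ, ∫⁻ ω, (G ω ⊓ (k:ℝ≥0∞)) * (F (X (s+1) i ω) ⊓ (m:ℝ≥0∞)) ∂P
        = ∫⁻ ω, (G ω ⊓ (k:ℝ≥0∞)) * (∫⁻ y, F y ⊓ (m:ℝ≥0∞) ∂(κ (τ s) (Xbar s i ω))) ∂P := by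
      intro k m
      have hint3 : Integrable (fun ω => gk k ω * ∫ y, fm m y ∂(κ (τ s) (Xbar s i ω))) P :=
        SMCaux.integrable_of_bounded ((hgkmeas k).aestronglyMeasurable.mul
          (((hkerSM m).comp_measurable hXba).aestronglyMeasurable)) (k*m)
          (fun ω => by
            rw [abs_mul]
            exact mul_le_mul (hgkb k ω) (hkerb m _) (abs_nonneg _) (Nat.cast_nonneg k))
      have h0 := SMCaux.lintegral_eq_of_integral_eq (hint2 k m) hint3
        (fun ω => mul_nonneg (hgk0 k ω) (hfm0 m _))
        (fun ω => mul_nonneg (hgk0 k ω) (integral_nonneg (hfm0 m))) (hreal k m)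
      calc ∫⁻ ω, (G ω ⊓ (k:ℝ≥0∞)) * (F (X (s+1) i ω) ⊓ (m:ℝ≥0∞)) ∂P
          = ∫⁻ ω, ENNReal.ofReal (gk k ω * fm m (X (s+1) i ω)) ∂P := by
            refine lintegral_congr fun ω => ?_
            rw [ENNReal.ofReal_mul (hgk0 k ω), hgkofReal, hfmofReal]
        _ = ∫⁻ ω, ENNReal.ofReal (gk k ω * ∫ y, fm m y ∂(κ (τ s) (Xbar s i ω))) ∂P := h0
        _ = ∫⁻ ω, (G ω ⊓ (k:ℝ≥0∞)) * (∫⁻ y, F y ⊓ (m:ℝ≥0∞) ∂(κ (τ s) (Xbar s i ω))) ∂P := by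
            refine lintegral_congr fun ω => ?_
            rw [ENNReal.ofReal_mul (hgk0 k ω), hgkofReal]
            congr 1
            rw [ofReal_integral_eq_lintegral_ofReal (hkifm m _) (ae_of_all _ (hfm0 m))]
            exact lintegral_congr fun y => hfmofReal m y
    have hL := SMCaux.key_limit P G (fun m ω => F (X (s+1) i ω) ⊓ (m:ℝ≥0∞))
        (fun ω => F (X (s+1) i ω)) hGa (fun m => (hF.comp hXa).min measurable_const)
        (fun ω a b hab => min_le_min le_rfl (Nat.cast_le.2 hab))
        (fun ω => SMCaux.iSup_min_nat _)
    have hR := SMCaux.key_limit P G (fun m ω => ∫⁻ y, F y ⊓ (m:ℝ≥0∞) ∂(κ (τ s) (Xbar s i ω)))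
        (fun ω => ∫⁻ y, F y ∂(κ (τ s) (Xbar s i ω))) hGa
        (fun m => (Measurable.lintegral_kernel (κ := κ (τ s)) (hF.min measurable_const)).comp hXba)
        (fun ω a b hab => lintegral_mono fun y => min_le_min le_rfl (Nat.cast_le.2 hab))
        (fun ω => by
          rw [← lintegral_iSup (fun m => hF.min measurable_const)
            (fun a b hab y => min_le_min le_rfl (Nat.cast_le.2 hab))]
          exact lintegral_congr fun y => SMCaux.iSup_min_nat _)
    rw [← hL, ← hR]
    exact iSup_congr fun k => iSup_congr fun m => hlin k m
  have hVpos : ∀ s, 1 ≤ s → s ≤ r + 1 → ∀ i ω, 0 < V s i ω := by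
    intro s h1 h2 i ω
    rw [hV s h1 h2 i ω]
    exact div_pos (hvpos s h1 h2 i ω) (mul_pos hMR (hvbarpos s h1 h2 ω))
  have hVle1 : ∀ s, 1 ≤ s → s ≤ r + 1 → ∀ i ω, V s i ω ≤ 1 := by
    intro s h1 h2 i ω
    rw [← hsumV s h1 h2 ω]
    exact Finset.single_le_sum (fun j _ => (hVpos s h1 h2 j ω).le) (Finset.mem_univ i)
  -- Step B : resampling step
  have stepB : ∀ s, 1 ≤ s → s ≤ r → ∀ G : Ω → ℝ≥0∞, Measurable[𝓕 (2*s-1)] G →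
      ∀ F : (ℕ → 𝒳) → ℝ≥0∞, Measurable F → ∀ i,
      ∫⁻ ω, G ω * F (Xbar s i ω) ∂P
        = ∫⁻ ω, G ω * (∑ j, ENNReal.ofReal (V s j ω) * F (X s j ω)) ∂P := by
    intro s hs1 hsr G hG F hF i
    have hsr1 : s ≤ r + 1 := by omega
    have hGa : Measurable G := hG.mono (h𝓕le _) le_rfl
    have hXba : Measurable (Xbar s i) := hXbarm s hs1 hsr i
    set fm : ℕ → (ℕ → 𝒳) → ℝ := fun m y => (F y ⊓ (m:ℝ≥0∞)).toReal with hfmdef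
    set gk : ℕ → Ω → ℝ := fun k ω => (G ω ⊓ (k:ℝ≥0∞)).toReal with hgkdef
    have hfmmeas : ∀ m, Measurable (fm m) := fun m => (hF.min measurable_const).ennreal_toReal
    have hgkmeasF : ∀ k, Measurable[𝓕 (2*s-1)] (gk k) :=
      fun k => (hG.min measurable_const).ennreal_toReal
    have hgkmeas : ∀ k, Measurable (gk k) := fun k => (hgkmeasF k).mono (h𝓕le _) le_rfl
    have hfm0 : ∀ m y, 0 ≤ fm m y := fun m y => ENNReal.toReal_nonneg
    have hgk0 : ∀ k ω, 0 ≤ gk k ω := fun k ω => ENNReal.toReal_nonneg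
    have hfmb : ∀ (m : ℕ) y, |fm m y| ≤ m := by
      intro m y
      rw [abs_of_nonneg (hfm0 m y)]
      calc (F y ⊓ (m:ℝ≥0∞)).toReal ≤ ((m:ℝ≥0∞)).toReal :=
            ENNReal.toReal_mono (by simp) (min_le_right _ _)
        _ = m := by simp
    have hgkb : ∀ (k : ℕ) ω, |gk k ω| ≤ k := by
      intro k ω
      rw [abs_of_nonneg (hgk0 k ω)]
      calc (G ω ⊓ (k:ℝ≥0∞)).toReal ≤ ((k:ℝ≥0∞)).toReal :=
            ENNReal.toReal_mono (by simp) (min_le_right _ _)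
        _ = k := by simp
    have hfmofReal : ∀ (m : ℕ) y, ENNReal.ofReal (fm m y) = F y ⊓ (m:ℝ≥0∞) :=
      fun m y => ENNReal.ofReal_toReal
        (((min_le_right _ _).trans_lt (ENNReal.natCast_lt_top m)).ne)
    have hgkofReal : ∀ (k : ℕ) ω, ENNReal.ofReal (gk k ω) = G ω ⊓ (k:ℝ≥0∞) :=
      fun k ω => ENNReal.ofReal_toReal
        (((min_le_right _ _).trans_lt (ENNReal.natCast_lt_top k)).ne)
    -- integrability of the resampling indicator functions
    have hindint : ∀ js : Fin M → Fin M,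
        Integrable (fun ω => ({ω' | ∀ i', I s i' ω' = js i'} : Set Ω).indicator
          (fun _ => (1:ℝ)) ω) P := by
      intro js
      by_contra hni
      have h0 : P[(fun ω => ({ω' | ∀ i', I s i' ω' = js i'} : Set Ω).indicator
          (fun _ => (1:ℝ)) ω) | 𝓕 (2*s-1)] = 0 := condExp_of_not_integrable hni
      have hae := hresample s hs1 hsr js
      rw [h0] at hae
      have hfalse : ∀ᵐ ω ∂P, False := by
        filter_upwards [hae.symm] with ω hω
        have hpos : 0 < ∏ i', V s (js i') ω :=
          Finset.prod_pos fun i' _ => hVpos s hs1 hsr1 (js i') ω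
        rw [hω] at hpos
        simp at hpos
      have hbot := Filter.eventually_false_iff_eq_bot.mp hfalse
      rw [ae_eq_bot] at hbot
      have huniv := measure_univ (μ := P)
      rw [hbot] at huniv
      simp at huniv
    -- pointwise decomposition of fm ∘ Xbar over the resampling indices
    have hdecomp : ∀ (m : ℕ) (ω : Ω), fm m (Xbar s i ω)
        = ∑ js : Fin M → Fin M, ({ω' | ∀ i', I s i' ω' = js i'} : Set Ω).indicator
            (fun _ => (1:ℝ)) ω * fm m (X s (js i) ω) := by
      intro m ω
      rw [Finset.sum_eq_single (fun i' => I s i' ω)]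
      · have hmem : ω ∈ ({ω' | ∀ i', I s i' ω' = (fun i' => I s i' ω) i'} : Set Ω) :=
          fun i' => rfl
        rw [Set.indicator_of_mem hmem, one_mul, hXbarI s hs1 hsr i ω]
      · intro js _ hjs
        have hnotmem : ω ∉ ({ω' | ∀ i', I s i' ω' = js i'} : Set Ω) := by
          intro hmem
          exact hjs (funext fun i' => (hmem i').symm)
        rw [Set.indicator_of_notMem hnotmem, zero_mul]
      · intro h
        exact absurd (Finset.mem_univ _) h
    -- the real-valued identity for truncations
    have hreal : ∀ k m : ℕ, ∫ ω, gk k ω * fm m (Xbar s i ω) ∂P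
        = ∫ ω, gk k ω * (∑ j, V s j ω * fm m (X s j ω)) ∂P := by
      intro k m
      have hprodmeas : ∀ js : Fin M → Fin M,
          Measurable[𝓕 (2*s-1)] (fun ω => gk k ω * fm m (X s (js i) ω)) :=
        fun js => (hgkmeasF k).mul ((hfmmeas m).comp (hXmeas s hs1 hsr1 (js i)))
      have hprodb : ∀ (js : Fin M → Fin M) ω, |gk k ω * fm m (X s (js i) ω)| ≤ (k:ℝ) * m := by
        intro js ω
        rw [abs_mul]
        exact mul_le_mul (hgkb k ω) (hfmb m _) (abs_nonneg _) (Nat.cast_nonneg k)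
      have hterm : ∀ js : Fin M → Fin M,
          ∫ ω, (gk k ω * fm m (X s (js i) ω)) *
            ({ω' | ∀ i', I s i' ω' = js i'} : Set Ω).indicator (fun _ => (1:ℝ)) ω ∂P
          = ∫ ω, (gk k ω * fm m (X s (js i) ω)) * (∏ i', V s (js i') ω) ∂P := by
        intro js
        refine SMCaux.integral_mul_eq (h𝓕le (2*s-1)) P (hprodmeas js).stronglyMeasurable
          (hindint js) ?_ (hresample s hs1 hsr js)
        exact (hindint js).bdd_mul
          ((hprodmeas js).mono (h𝓕le _) le_rfl).aestronglyMeasurable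
          (c := (k:ℝ)*m) (ae_of_all _ fun ω => by rw [Real.norm_eq_abs]; exact hprodb js ω)
      have hint1 : ∀ js : Fin M → Fin M, Integrable (fun ω =>
          (gk k ω * fm m (X s (js i) ω)) *
            ({ω' | ∀ i', I s i' ω' = js i'} : Set Ω).indicator (fun _ => (1:ℝ)) ω) P :=
        fun js => (hindint js).bdd_mul
          ((hprodmeas js).mono (h𝓕le _) le_rfl).aestronglyMeasurable
          (c := (k:ℝ)*m) (ae_of_all _ fun ω => by rw [Real.norm_eq_abs]; exact hprodb js ω)
      have hint2 : ∀ js : Fin M → Fin M, Integrable (fun ω =>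
          (gk k ω * fm m (X s (js i) ω)) * (∏ i', V s (js i') ω)) P := by
        intro js
        refine SMCaux.integrable_of_bounded ?_ ((k:ℝ)*m) ?_
        · exact (((hprodmeas js).mono (h𝓕le _) le_rfl).mul
            (Finset.measurable_prod _ fun i' _ => hVm s hs1 hsr1 (js i'))).aestronglyMeasurable
        · intro ω
          rw [abs_mul]
          calc |gk k ω * fm m (X s (js i) ω)| * |∏ i', V s (js i') ω|
              ≤ ((k:ℝ)*m) * 1 := by
                refine mul_le_mul (hprodb js ω) ?_ (abs_nonneg _)
                  (by positivity)
                rw [abs_of_nonneg (Finset.prod_nonneg fun i' _ => (hVpos s hs1 hsr1 (js i') ω).le)]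
                exact Finset.prod_le_one (fun i' _ => (hVpos s hs1 hsr1 (js i') ω).le)
                  (fun i' _ => hVle1 s hs1 hsr1 (js i') ω)
            _ = (k:ℝ)*m := mul_one _
      calc ∫ ω, gk k ω * fm m (Xbar s i ω) ∂P
          = ∫ ω, ∑ js : Fin M → Fin M, (gk k ω * fm m (X s (js i) ω)) *
              ({ω' | ∀ i', I s i' ω' = js i'} : Set Ω).indicator (fun _ => (1:ℝ)) ω ∂P := by
            refine integral_congr_ae (Filter.Eventually.of_forall fun ω => ?_)
            show gk k ω * fm m (Xbar s i ω) = _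
            rw [hdecomp m ω, Finset.mul_sum]
            exact Finset.sum_congr rfl fun js _ => by ring
        _ = ∑ js : Fin M → Fin M, ∫ ω, (gk k ω * fm m (X s (js i) ω)) *
              ({ω' | ∀ i', I s i' ω' = js i'} : Set Ω).indicator (fun _ => (1:ℝ)) ω ∂P :=
            integral_finset_sum _ (fun js _ => hint1 js)
        _ = ∑ js : Fin M → Fin M, ∫ ω, (gk k ω * fm m (X s (js i) ω)) *
              (∏ i', V s (js i') ω) ∂P :=
            Finset.sum_congr rfl fun js _ => hterm js
        _ = ∫ ω, ∑ js : Fin M → Fin M, (gk k ω * fm m (X s (js i) ω)) *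
              (∏ i', V s (js i') ω) ∂P :=
            (integral_finset_sum _ (fun js _ => hint2 js)).symm
        _ = ∫ ω, gk k ω * (∑ j, V s j ω * fm m (X s j ω)) ∂P := by
            refine integral_congr_ae (Filter.Eventually.of_forall fun ω => ?_)
            show _ = gk k ω * (∑ j, V s j ω * fm m (X s j ω))
            have hpi := SMCaux.sum_pi_prod i (fun j => fm m (X s j ω)) (fun j => V s j ω)
              (hsumV s hs1 hsr1 ω)
            calc ∑ js : Fin M → Fin M, (gk k ω * fm m (X s (js i) ω)) * ∏ i', V s (js i') ω
                = gk k ω * ∑ js : Fin M → Fin M, fm m (X s (js i) ω) * ∏ i', V s (js i') ω := by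
                  rw [Finset.mul_sum]
                  exact Finset.sum_congr rfl fun js _ => by ring
              _ = gk k ω * ∑ j, fm m (X s j ω) * V s j ω := by rw [hpi]
              _ = gk k ω * ∑ j, V s j ω * fm m (X s j ω) := by
                  congr 1
                  exact Finset.sum_congr rfl fun j _ => by ring
    -- the lintegral identity for truncations
    have hlin : ∀ k m : ℕ, ∫⁻ ω, (G ω ⊓ (k:ℝ≥0∞)) * (F (Xbar s i ω) ⊓ (m:ℝ≥0∞)) ∂P
        = ∫⁻ ω, (G ω ⊓ (k:ℝ≥0∞)) *
            (∑ j, ENNReal.ofReal (V s j ω) * (F (X s j ω) ⊓ (m:ℝ≥0∞))) ∂P := by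
      intro k m
      have habs : ∀ ω, |∑ j, V s j ω * fm m (X s j ω)| ≤ m := by
        intro ω
        calc |∑ j, V s j ω * fm m (X s j ω)| ≤ ∑ j, |V s j ω * fm m (X s j ω)| :=
              Finset.abs_sum_le_sum_abs _ _
          _ ≤ ∑ j, V s j ω * m := by
              refine Finset.sum_le_sum fun j _ => ?_
              rw [abs_mul, abs_of_nonneg (hVpos s hs1 hsr1 j ω).le]
              exact mul_le_mul_of_nonneg_left (hfmb m _) (hVpos s hs1 hsr1 j ω).le
          _ = m := by rw [← Finset.sum_mul, hsumV s hs1 hsr1 ω, one_mul]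
      have hsummeas : Measurable (fun ω => ∑ j, V s j ω * fm m (X s j ω)) :=
        Finset.measurable_sum _ fun j _ =>
          (hVm s hs1 hsr1 j).mul ((hfmmeas m).comp (hXm s hs1 hsr1 j))
      have hsum0 : ∀ ω, 0 ≤ ∑ j, V s j ω * fm m (X s j ω) :=
        fun ω => Finset.sum_nonneg fun j _ =>
          mul_nonneg (hVpos s hs1 hsr1 j ω).le (hfm0 m _)
      have hint2 : Integrable (fun ω => gk k ω * fm m (Xbar s i ω)) P := by
        refine SMCaux.integrable_of_bounded
          (((hgkmeas k).mul ((hfmmeas m).comp hXba)).aestronglyMeasurable) ((k:ℝ)*m)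
          (fun ω => ?_)
        rw [abs_mul]
        exact mul_le_mul (hgkb k ω) (hfmb m _) (abs_nonneg _) (Nat.cast_nonneg k)
      have hint3 : Integrable (fun ω => gk k ω * (∑ j, V s j ω * fm m (X s j ω))) P := by
        refine SMCaux.integrable_of_bounded
          (((hgkmeas k).mul hsummeas).aestronglyMeasurable) ((k:ℝ)*m) (fun ω => ?_)
        rw [abs_mul]
        exact mul_le_mul (hgkb k ω) (habs ω) (abs_nonneg _) (Nat.cast_nonneg k)
      have h0 := SMCaux.lintegral_eq_of_integral_eq hint2 hint3
        (fun ω => mul_nonneg (hgk0 k ω) (hfm0 m _))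
        (fun ω => mul_nonneg (hgk0 k ω) (hsum0 ω)) (hreal k m)
      calc ∫⁻ ω, (G ω ⊓ (k:ℝ≥0∞)) * (F (Xbar s i ω) ⊓ (m:ℝ≥0∞)) ∂P
          = ∫⁻ ω, ENNReal.ofReal (gk k ω * fm m (Xbar s i ω)) ∂P := by
            refine lintegral_congr fun ω => ?_
            rw [ENNReal.ofReal_mul (hgk0 k ω), hgkofReal, hfmofReal]
        _ = ∫⁻ ω, ENNReal.ofReal (gk k ω * (∑ j, V s j ω * fm m (X s j ω))) ∂P := h0
        _ = ∫⁻ ω, (G ω ⊓ (k:ℝ≥0∞)) *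
              (∑ j, ENNReal.ofReal (V s j ω) * (F (X s j ω) ⊓ (m:ℝ≥0∞))) ∂P := by
            refine lintegral_congr fun ω => ?_
            rw [ENNReal.ofReal_mul (hgk0 k ω), hgkofReal,
              ENNReal.ofReal_sum_of_nonneg (fun j _ =>
                mul_nonneg (hVpos s hs1 hsr1 j ω).le (hfm0 m _))]
            congr 1
            refine Finset.sum_congr rfl fun j _ => ?_
            rw [ENNReal.ofReal_mul (hVpos s hs1 hsr1 j ω).le, hfmofReal]
    -- pass to the limit
    have hL := SMCaux.key_limit P G (fun m ω => F (Xbar s i ω) ⊓ (m:ℝ≥0∞))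
        (fun ω => F (Xbar s i ω)) hGa (fun m => (hF.comp hXba).min measurable_const)
        (fun ω a b hab => min_le_min le_rfl (Nat.cast_le.2 hab))
        (fun ω => SMCaux.iSup_min_nat _)
    have hR := SMCaux.key_limit P G
        (fun m ω => ∑ j, ENNReal.ofReal (V s j ω) * (F (X s j ω) ⊓ (m:ℝ≥0∞)))
        (fun ω => ∑ j, ENNReal.ofReal (V s j ω) * F (X s j ω)) hGa
        (fun m => Finset.measurable_sum _ fun j _ =>
          (ENNReal.measurable_ofReal.comp (hVm s hs1 hsr1 j)).mul
            ((hF.comp (hXm s hs1 hsr1 j)).min measurable_const))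
        (fun ω a b hab => Finset.sum_le_sum fun j _ =>
          mul_le_mul_right (min_le_min le_rfl (Nat.cast_le.2 hab)) _)
        (fun ω => by
          show (⨆ m : ℕ, ∑ j, ENNReal.ofReal (V s j ω) * (F (X s j ω) ⊓ (m:ℝ≥0∞)))
            = ∑ j, ENNReal.ofReal (V s j ω) * F (X s j ω)
          have hsw := ENNReal.finsetSum_iSup_of_monotone (s := Finset.univ)
            (f := fun j (m : ℕ) => ENNReal.ofReal (V s j ω) * (F (X s j ω) ⊓ (m:ℝ≥0∞)))
            (fun j a b hab => mul_le_mul_right (min_le_min le_rfl (Nat.cast_le.2 hab)) _)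
          rw [← hsw]
          refine Finset.sum_congr rfl fun j _ => ?_
          rw [← ENNReal.mul_iSup, SMCaux.iSup_min_nat])
    rw [← hL, ← hR]
    exact iSup_congr fun k => iSup_congr fun m => hlin k m
  -- the law of each initial particle is Q
  have hlaw : ∀ i : Fin M, Measure.map (X 1 i) P = Q := by
    intro i
    have hX1 : Measurable (X 1 i) := hXm 1 le_rfl (by omega) i
    refine Measure.ext fun B hB => ?_
    rw [Measure.map_apply hX1 hB]
    have hinit' := hinit (fun j => if j = i then B.indicator (fun _ => (1:ℝ)) else fun _ => 1)
      (fun j => by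
        by_cases hj : j = i
        · simpa [hj] using (measurable_const (a := (1:ℝ))).indicator hB
        · simp only [if_neg hj]; exact measurable_const)
      (fun j => ⟨1, fun x => by
        show |(if j = i then B.indicator (fun _ => (1:ℝ)) else fun _ => 1) x| ≤ 1
        by_cases hj : j = i
        · rw [if_pos hj, Set.indicator_apply]
          split_ifs <;> simp
        · rw [if_neg hj]
          simp⟩)
    have e1 : (fun ω => ∏ j, (if j = i then B.indicator (fun _ => (1:ℝ)) else fun _ => 1)
        (X 1 j ω)) = fun ω => (X 1 i ⁻¹' B).indicator (fun _ => (1:ℝ)) ω := by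
      funext ω
      rw [Finset.prod_eq_single i (fun b _ hb => by simp [if_neg hb]) (by simp)]
      simp [Set.indicator_apply]
    have e2 : (∏ j : Fin M, ∫ y, (if j = i then B.indicator (fun _ => (1:ℝ)) else fun _ => 1) y ∂Q)
        = ∫ y, B.indicator (fun _ => (1:ℝ)) y ∂Q := by
      rw [Finset.prod_eq_single i (fun b _ hb => by simp [if_neg hb]) (by simp)]
      simp
    rw [e1, e2, integral_indicator_const (1:ℝ) (hX1 hB), integral_indicator_const (1:ℝ) hB]
      at hinit'
    simp only [smul_eq_mul, mul_one] at hinit'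
    exact (ENNReal.toReal_eq_toReal_iff' (measure_ne_top P _) (measure_ne_top Q _)).mp hinit'
  -- ENNReal algebra helper
  have halg : ∀ (a c : ℝ≥0∞) (f : Fin M → ℝ≥0∞),
      a * (c * ∑ i, f i) = c * ∑ i, a * f i := by
    intro a c f
    rw [Finset.mul_sum, Finset.mul_sum, Finset.mul_sum]
    exact Finset.sum_congr rfl fun i _ => by ring
  -- MAIN : the key unbiasedness identity at the level of ℝ≥0∞
  have MAIN : ∀ Θ : (ℕ → 𝒳) → ℝ≥0∞, Measurable Θ →
      (∫⁻ ω, (∏ t ∈ Finset.Icc 1 r, ENNReal.ofReal (vbar t ω)) *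
        ((M:ℝ≥0∞)⁻¹ * ∑ i, ENNReal.ofReal (v (r+1) i ω) * Θ (X (r+1) i ω)) ∂P)
      = ∫⁻ x, (∏ n ∈ Finset.Ioc 0 N, ENNReal.ofReal (α n x)) * Θ x ∂Q := by
    intro Θ hΘ
    set H : ℕ → (ℕ → 𝒳) → ℝ≥0∞ := SMCaux.Hfun κ α τ r Θ with hHdef
    have hHmeas : ∀ k, Measurable (H k) := SMCaux.Hfun_measurable κ α hαmeas τ r Θ hΘ
    have hHrec : ∀ s, 1 ≤ s → s ≤ r → ∀ x, H (r + 1 - s) x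
        = ∫⁻ y, (∏ n ∈ Finset.Ioc (τ s) (τ (s+1)), ENNReal.ofReal (α n y)) * H (r - s) y
            ∂(κ (τ s) x) := by
      intro s h1 h2 x
      have e1 : r + 1 - s = (r - s) + 1 := by omega
      have e2 : r - (r - s) = s := by omega
      rw [hHdef, e1, SMCaux.Hfun_succ κ α τ r Θ (r - s)]
      simp only [e2]
    have hvE : ∀ s, 1 ≤ s → s ≤ r + 1 → ∀ i ω, ENNReal.ofReal (v s i ω)
        = ∏ n ∈ Finset.Ioc (τ (s-1)) (τ s), ENNReal.ofReal (α n (X s i ω)) := by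
      intro s h1 h2 i ω
      rw [hv s h1 h2 i ω, ENNReal.ofReal_prod_of_nonneg (fun n _ => (hαpos n _).le),
        Finset.Icc_add_one_left_eq_Ioc]
    -- the particle-side single step
    have stepT : ∀ s, 1 ≤ s → s ≤ r →
        (∫⁻ ω, (∏ t ∈ Finset.Icc 1 s, ENNReal.ofReal (vbar t ω)) *
          ((M:ℝ≥0∞)⁻¹ * ∑ i, ENNReal.ofReal (v (s+1) i ω) * H (r - s) (X (s+1) i ω)) ∂P)
        = ∫⁻ ω, (∏ t ∈ Finset.Icc 1 (s-1), ENNReal.ofReal (vbar t ω)) *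
          ((M:ℝ≥0∞)⁻¹ * ∑ i, ENNReal.ofReal (v s i ω) * H (r + 1 - s) (X s i ω)) ∂P := by
      intro s hs1 hsr
      have hsr1 : s ≤ r + 1 := by omega
      set Wg : Ω → ℝ≥0∞ := fun ω => ∏ t ∈ Finset.Icc 1 s, ENNReal.ofReal (vbar t ω) with hWgdef
      set Fs : (ℕ → 𝒳) → ℝ≥0∞ := fun y =>
        (∏ n ∈ Finset.Ioc (τ s) (τ (s+1)), ENNReal.ofReal (α n y)) * H (r - s) y with hFsdef
      have hFsmeas : Measurable Fs :=
        (Finset.measurable_prod _ fun n _ => ENNReal.measurable_ofReal.comp (hαmeas n)).mul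
          (hHmeas _)
      have hWgF : Measurable[𝓕 (2*s)] Wg :=
        (hWmeasF s hs1 hsr1).mono (h𝓕mono (by omega)) le_rfl
      have hWgF' : Measurable[𝓕 (2*s-1)] Wg := hWmeasF s hs1 hsr1
      have hWga : Measurable Wg := hWm s hsr1
      have hXs1 : ∀ i, Measurable (X (s+1) i) := fun i => hXm (s+1) (by omega) (by omega) i
      calc ∫⁻ ω, Wg ω *
            ((M:ℝ≥0∞)⁻¹ * ∑ i, ENNReal.ofReal (v (s+1) i ω) * H (r - s) (X (s+1) i ω)) ∂P
          = ∫⁻ ω, (M:ℝ≥0∞)⁻¹ * ∑ i, Wg ω * Fs (X (s+1) i ω) ∂P := by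
            refine lintegral_congr fun ω => ?_
            rw [halg]
            congr 1
            refine Finset.sum_congr rfl fun i _ => ?_
            congr 1
            congr 1
            exact hvE (s+1) (by omega) (by omega) i ω
        _ = (M:ℝ≥0∞)⁻¹ * ∑ i, ∫⁻ ω, Wg ω * Fs (X (s+1) i ω) ∂P := by
            have hmi : ∀ i : Fin M, Measurable fun ω => Wg ω * Fs (X (s+1) i ω) :=
              fun i => hWga.mul (hFsmeas.comp (hXs1 i))
            rw [lintegral_const_mul _ (Finset.measurable_sum _ fun i _ => hmi i),
              lintegral_finset_sum _ (fun i _ => hmi i)]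
        _ = (M:ℝ≥0∞)⁻¹ * ∑ i, ∫⁻ ω, Wg ω * H (r + 1 - s) (Xbar s i ω) ∂P := by
            congr 1
            refine Finset.sum_congr rfl fun i _ => ?_
            rw [stepA s hs1 hsr Wg hWgF Fs hFsmeas i]
            refine lintegral_congr fun ω => ?_
            congr 1
            exact (hHrec s hs1 hsr (Xbar s i ω)).symm
        _ = (M:ℝ≥0∞)⁻¹ * ∑ i : Fin M, ∫⁻ ω, Wg ω *
              (∑ j, ENNReal.ofReal (V s j ω) * H (r + 1 - s) (X s j ω)) ∂P := by
            congr 1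
            exact Finset.sum_congr rfl fun i _ => stepB s hs1 hsr Wg hWgF' _ (hHmeas _) i
        _ = (M:ℝ≥0∞)⁻¹ * ((M:ℝ≥0∞) * ∫⁻ ω, Wg ω *
              (∑ j, ENNReal.ofReal (V s j ω) * H (r + 1 - s) (X s j ω)) ∂P) := by
            rw [Finset.sum_const, Finset.card_univ, Fintype.card_fin, nsmul_eq_mul]
        _ = ∫⁻ ω, Wg ω * (∑ j, ENNReal.ofReal (V s j ω) * H (r + 1 - s) (X s j ω)) ∂P := by
            rw [← mul_assoc, ENNReal.inv_mul_cancel hM0 hMt, one_mul]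
        _ = ∫⁻ ω, (∏ t ∈ Finset.Icc 1 (s-1), ENNReal.ofReal (vbar t ω)) *
              ((M:ℝ≥0∞)⁻¹ * ∑ i, ENNReal.ofReal (v s i ω) * H (r + 1 - s) (X s i ω)) ∂P := by
            refine lintegral_congr fun ω => ?_
            have hb0 : ENNReal.ofReal (vbar s ω) ≠ 0 :=
              (ENNReal.ofReal_pos.mpr (hvbarpos s hs1 hsr1 ω)).ne'
            have hbt : ENNReal.ofReal (vbar s ω) ≠ ⊤ := ENNReal.ofReal_ne_top
            have hWsplit : Wg ω = (∏ t ∈ Finset.Icc 1 (s-1), ENNReal.ofReal (vbar t ω)) *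
                ENNReal.ofReal (vbar s ω) := by
              have e : s - 1 + 1 = s := by omega
              have h2 : Wg ω = ∏ t ∈ Finset.Icc 1 (s-1+1), ENNReal.ofReal (vbar t ω) := by
                rw [hWgdef, e]
              rw [h2, Finset.prod_Icc_succ_top (by omega : 1 ≤ s - 1 + 1), e]
            have hkey : ENNReal.ofReal (vbar s ω) *
                ((M:ℝ≥0∞) * ENNReal.ofReal (vbar s ω))⁻¹ = (M:ℝ≥0∞)⁻¹ := by
              rw [ENNReal.mul_inv (Or.inl hM0) (Or.inl hMt), mul_comm, mul_assoc,
                ENNReal.inv_mul_cancel hb0 hbt, mul_one]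
            have hVE : ∀ j, ENNReal.ofReal (V s j ω) = ENNReal.ofReal (v s j ω) *
                ((M:ℝ≥0∞) * ENNReal.ofReal (vbar s ω))⁻¹ := by
              intro j
              rw [hV s hs1 hsr1 j ω,
                ENNReal.ofReal_div_of_pos (mul_pos hMR (hvbarpos s hs1 hsr1 ω)),
                ENNReal.ofReal_mul (Nat.cast_nonneg M), ENNReal.ofReal_natCast,
                div_eq_mul_inv]
            rw [hWsplit, Finset.mul_sum, halg, Finset.mul_sum]
            refine Finset.sum_congr rfl fun j _ => ?_
            rw [hVE j, ← hkey]
            ring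
    -- chaining the particle-side steps
    have chainT : ∀ m, m ≤ r →
        (∫⁻ ω, (∏ t ∈ Finset.Icc 1 m, ENNReal.ofReal (vbar t ω)) *
          ((M:ℝ≥0∞)⁻¹ * ∑ i, ENNReal.ofReal (v (m+1) i ω) * H (r - m) (X (m+1) i ω)) ∂P)
        = ∫⁻ ω, (∏ t ∈ Finset.Icc 1 0, ENNReal.ofReal (vbar t ω)) *
          ((M:ℝ≥0∞)⁻¹ * ∑ i, ENNReal.ofReal (v 1 i ω) * H r (X 1 i ω)) ∂P := by
      intro m
      induction m with
      | zero => intro _; rfl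
      | succ n ih =>
        intro h
        have hstep := stepT (n+1) (by omega) (by omega)
        rw [show r + 1 - (n+1) = r - n from by omega,
          show (n+1) - 1 = n from by omega] at hstep
        exact hstep.trans (ih (by omega))
    -- base case : transport to `Q` via the law of the initial particles
    have base : (∫⁻ ω, (∏ t ∈ Finset.Icc 1 0, ENNReal.ofReal (vbar t ω)) *
        ((M:ℝ≥0∞)⁻¹ * ∑ i, ENNReal.ofReal (v 1 i ω) * H r (X 1 i ω)) ∂P)
        = ∫⁻ x, (∏ n ∈ Finset.Ioc 0 (τ 1), ENNReal.ofReal (α n x)) * H r x ∂Q := by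
      have hB : Measurable (fun x => (∏ n ∈ Finset.Ioc 0 (τ 1), ENNReal.ofReal (α n x))
          * H r x) :=
        (Finset.measurable_prod _ fun n _ => ENNReal.measurable_ofReal.comp (hαmeas n)).mul
          (hHmeas r)
      have hX1 : ∀ i : Fin M, Measurable (X 1 i) := fun i => hXm 1 le_rfl (by omega) i
      calc ∫⁻ ω, (∏ t ∈ Finset.Icc 1 0, ENNReal.ofReal (vbar t ω)) *
            ((M:ℝ≥0∞)⁻¹ * ∑ i, ENNReal.ofReal (v 1 i ω) * H r (X 1 i ω)) ∂P
          = ∫⁻ ω, (M:ℝ≥0∞)⁻¹ * ∑ i, (fun x =>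
              (∏ n ∈ Finset.Ioc 0 (τ 1), ENNReal.ofReal (α n x)) * H r x) (X 1 i ω) ∂P := by
            refine lintegral_congr fun ω => ?_
            rw [show Finset.Icc 1 0 = (∅ : Finset ℕ) from Finset.Icc_eq_empty (by omega),
              Finset.prod_empty, one_mul]
            congr 1
            refine Finset.sum_congr rfl fun i _ => ?_
            have := hvE 1 le_rfl (by omega) i ω
            rw [show (1:ℕ) - 1 = 0 from rfl, hτ0] at this
            rw [this]
        _ = (M:ℝ≥0∞)⁻¹ * ∑ i : Fin M, ∫⁻ ω, (fun x =>
              (∏ n ∈ Finset.Ioc 0 (τ 1), ENNReal.ofReal (α n x)) * H r x) (X 1 i ω) ∂P := by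
            have hmi : ∀ i : Fin M, Measurable fun ω => (fun x =>
                (∏ n ∈ Finset.Ioc 0 (τ 1), ENNReal.ofReal (α n x)) * H r x) (X 1 i ω) :=
              fun i => hB.comp (hX1 i)
            rw [lintegral_const_mul _ (Finset.measurable_sum _ fun i _ => hmi i),
              lintegral_finset_sum _ (fun i _ => hmi i)]
        _ = (M:ℝ≥0∞)⁻¹ * ∑ i : Fin M, ∫⁻ x,
              (∏ n ∈ Finset.Ioc 0 (τ 1), ENNReal.ofReal (α n x)) * H r x ∂Q := by
            congr 1
            refine Finset.sum_congr rfl fun i _ => ?_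
            rw [← hlaw i, lintegral_map hB (hX1 i)]
        _ = ∫⁻ x, (∏ n ∈ Finset.Ioc 0 (τ 1), ENNReal.ofReal (α n x)) * H r x ∂Q := by
            rw [Finset.sum_const, Finset.card_univ, Fintype.card_fin, nsmul_eq_mul,
              ← mul_assoc, ENNReal.inv_mul_cancel hM0 hMt, one_mul]
    -- the Q-side steps
    have stepQ : ∀ s, 1 ≤ s → s ≤ r →
        (∫⁻ x, (∏ n ∈ Finset.Ioc 0 (τ s), ENNReal.ofReal (α n x)) * H (r + 1 - s) x ∂Q)
        = ∫⁻ x, (∏ n ∈ Finset.Ioc 0 (τ (s+1)), ENNReal.ofReal (α n x)) * H (r - s) x ∂Q := by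
      intro s h1 h2
      have hτs : τ s ≤ N := hτsN s (by omega)
      have hA1meas : Measurable (fun x => ∏ n ∈ Finset.Ioc 0 (τ s), ENNReal.ofReal (α n x)) :=
        Finset.measurable_prod _ fun n _ => ENNReal.measurable_ofReal.comp (hαmeas n)
      have hBmeas : Measurable (fun y =>
          (∏ n ∈ Finset.Ioc (τ s) (τ (s+1)), ENNReal.ofReal (α n y)) * H (r - s) y) :=
        (Finset.measurable_prod _ fun n _ => ENNReal.measurable_ofReal.comp (hαmeas n)).mul
          (hHmeas _)
      calc ∫⁻ x, (∏ n ∈ Finset.Ioc 0 (τ s), ENNReal.ofReal (α n x)) * H (r + 1 - s) x ∂Q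
          = ∫⁻ x, ∫⁻ y, (∏ n ∈ Finset.Ioc 0 (τ s), ENNReal.ofReal (α n x)) *
              ((∏ n ∈ Finset.Ioc (τ s) (τ (s+1)), ENNReal.ofReal (α n y)) * H (r - s) y)
              ∂(κ (τ s) x) ∂Q := by
            refine lintegral_congr fun x => ?_
            rw [hHrec s h1 h2 x]
            exact (lintegral_const_mul _ hBmeas).symm
        _ = ∫⁻ x, ∫⁻ y, (∏ n ∈ Finset.Ioc 0 (τ s), ENNReal.ofReal (α n y)) *
              ((∏ n ∈ Finset.Ioc (τ s) (τ (s+1)), ENNReal.ofReal (α n y)) * H (r - s) y)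
              ∂(κ (τ s) x) ∂Q := by
            refine lintegral_congr fun x => ?_
            refine lintegral_congr_ae ?_
            have hNmeas : MeasurableSet {y : ℕ → 𝒳 |
                (∏ n ∈ Finset.Ioc 0 (τ s), ENNReal.ofReal (α n y))
                = ∏ n ∈ Finset.Ioc 0 (τ s), ENNReal.ofReal (α n x)} :=
              hA1meas (measurableSet_singleton _)
            have hsub : {y : ℕ → 𝒳 | ∀ k, 1 ≤ k → k ≤ τ s → y k = x k} ⊆
                {y : ℕ → 𝒳 | (∏ n ∈ Finset.Ioc 0 (τ s), ENNReal.ofReal (α n y))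
                  = ∏ n ∈ Finset.Ioc 0 (τ s), ENNReal.ofReal (α n x)} := by
              intro y hy
              refine Finset.prod_congr rfl fun n hn => ?_
              have hn' := Finset.mem_Ioc.mp hn
              have := hαloc n y x (fun k hk1 hk2 => hy k hk1 (by omega))
              rw [this]
            have h1' : (κ (τ s) x) {y : ℕ → 𝒳 |
                (∏ n ∈ Finset.Ioc 0 (τ s), ENNReal.ofReal (α n y))
                = ∏ n ∈ Finset.Ioc 0 (τ s), ENNReal.ofReal (α n x)} = 1 :=
              le_antisymm prob_le_one ((hκsupp (τ s) x) ▸ measure_mono hsub)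
            have h0 : (κ (τ s) x) {y : ℕ → 𝒳 |
                (∏ n ∈ Finset.Ioc 0 (τ s), ENNReal.ofReal (α n y))
                = ∏ n ∈ Finset.Ioc 0 (τ s), ENNReal.ofReal (α n x)}ᶜ = 0 := by
              rw [measure_compl hNmeas (measure_ne_top _ _), h1', measure_univ, tsub_self]
            have hae : ∀ᵐ y ∂(κ (τ s) x),
                (∏ n ∈ Finset.Ioc 0 (τ s), ENNReal.ofReal (α n y))
                = ∏ n ∈ Finset.Ioc 0 (τ s), ENNReal.ofReal (α n x) := by
              rw [ae_iff]
              rw [show {y : ℕ → 𝒳 | ¬ ((∏ n ∈ Finset.Ioc 0 (τ s), ENNReal.ofReal (α n y))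
                = ∏ n ∈ Finset.Ioc 0 (τ s), ENNReal.ofReal (α n x))} = {y : ℕ → 𝒳 |
                (∏ n ∈ Finset.Ioc 0 (τ s), ENNReal.ofReal (α n y))
                = ∏ n ∈ Finset.Ioc 0 (τ s), ENNReal.ofReal (α n x)}ᶜ from rfl]
              exact h0
            filter_upwards [hae] with y hy
            rw [hy]
        _ = ∫⁻ y, (∏ n ∈ Finset.Ioc 0 (τ s), ENNReal.ofReal (α n y)) *
              ((∏ n ∈ Finset.Ioc (τ s) (τ (s+1)), ENNReal.ofReal (α n y)) * H (r - s) y)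
              ∂(Q.bind (κ (τ s))) :=
            (Measure.lintegral_bind (κ (τ s)).measurable.aemeasurable (hA1meas.mul hBmeas).aemeasurable).symm
        _ = ∫⁻ y, (∏ n ∈ Finset.Ioc 0 (τ s), ENNReal.ofReal (α n y)) *
              ((∏ n ∈ Finset.Ioc (τ s) (τ (s+1)), ENNReal.ofReal (α n y)) * H (r - s) y)
              ∂Q := by
            rw [hκQ (τ s) hτs]
        _ = ∫⁻ x, (∏ n ∈ Finset.Ioc 0 (τ (s+1)), ENNReal.ofReal (α n x)) * H (r - s) x ∂Q := by
            refine lintegral_congr fun y => ?_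
            rw [← mul_assoc, Finset.prod_Ioc_consecutive _ (Nat.zero_le (τ s))
              (hτle s (s+1) (by omega) (by omega))]
    -- chaining the Q-side steps
    have chainQ : ∀ m, m ≤ r →
        (∫⁻ x, (∏ n ∈ Finset.Ioc 0 (τ 1), ENNReal.ofReal (α n x)) * H r x ∂Q)
        = ∫⁻ x, (∏ n ∈ Finset.Ioc 0 (τ (m+1)), ENNReal.ofReal (α n x)) * H (r - m) x ∂Q := by
      intro m
      induction m with
      | zero => intro _; rfl
      | succ n ih =>
        intro h
        have hstep := stepQ (n+1) (by omega) (by omega)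
        rw [show r + 1 - (n+1) = r - n from by omega] at hstep
        exact (ih (by omega)).trans hstep
    -- conclusion of MAIN
    have hct := chainT r le_rfl
    rw [Nat.sub_self] at hct
    have hcq := chainQ r le_rfl
    rw [Nat.sub_self] at hcq
    calc ∫⁻ ω, (∏ t ∈ Finset.Icc 1 r, ENNReal.ofReal (vbar t ω)) *
          ((M:ℝ≥0∞)⁻¹ * ∑ i, ENNReal.ofReal (v (r+1) i ω) * Θ (X (r+1) i ω)) ∂P
        = ∫⁻ ω, (∏ t ∈ Finset.Icc 1 0, ENNReal.ofReal (vbar t ω)) *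
          ((M:ℝ≥0∞)⁻¹ * ∑ i, ENNReal.ofReal (v 1 i ω) * H r (X 1 i ω)) ∂P := hct
      _ = ∫⁻ x, (∏ n ∈ Finset.Ioc 0 (τ 1), ENNReal.ofReal (α n x)) * H r x ∂Q := base
      _ = ∫⁻ x, (∏ n ∈ Finset.Ioc 0 (τ (r+1)), ENNReal.ofReal (α n x)) * H 0 x ∂Q := hcq
      _ = ∫⁻ x, (∏ n ∈ Finset.Ioc 0 N, ENNReal.ofReal (α n x)) * Θ x ∂Q := by
          rw [hτN]
          rfl
  -- final assembly
  have hprodmeas : Measurable (fun x => ∏ n ∈ Finset.Icc 1 N, α n x) :=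
    Finset.measurable_prod _ fun n _ => hαmeas n
  have hprodpos : ∀ x, 0 < ∏ n ∈ Finset.Icc 1 N, α n x :=
    fun x => Finset.prod_pos fun n _ => hαpos n x
  have hLmeas : Measurable L := by
    have he : L = fun x => (∏ n ∈ Finset.Icc 1 N, α n x) / ZN := funext hL
    rw [he]
    exact hprodmeas.div_const _
  have hψprod : ∀ x, ψ x * (∏ n ∈ Finset.Icc 1 N, α n x) = ZN * (ψ x * L x) := by
    intro x
    rw [hL x]
    field_simp
  have hAofReal : ∀ x, (∏ n ∈ Finset.Ioc 0 N, ENNReal.ofReal (α n x))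
      = ENNReal.ofReal (∏ n ∈ Finset.Icc 1 N, α n x) := by
    intro x
    rw [ENNReal.ofReal_prod_of_nonneg (fun n _ => (hαpos n x).le), ← Finset.Icc_add_one_left_eq_Ioc, zero_add]
  have hofRealmax : ∀ a : ℝ, ENNReal.ofReal (max a 0) = ENNReal.ofReal a := by
    intro a
    rcases le_total a 0 with h | h
    · simp [max_eq_right h, ENNReal.ofReal_of_nonpos h]
    · rw [max_eq_left h]
  have hsplitψ : ∀ a : ℝ, max a 0 - max (-a) 0 = a := by
    intro a
    rcases le_total 0 a with h | h
    · rw [max_eq_left h, max_eq_right (neg_nonpos.mpr h), sub_zero]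
    · rw [max_eq_right h, max_eq_left (neg_nonneg.mpr h), zero_sub, neg_neg]
  -- finiteness of the dominating integral
  have hintabs : (∫⁻ x, (∏ n ∈ Finset.Ioc 0 N, ENNReal.ofReal (α n x)) *
      ENNReal.ofReal (|ψ x|) ∂Q) < ⊤ := by
    have heq : ∀ x, (∏ n ∈ Finset.Ioc 0 N, ENNReal.ofReal (α n x)) * ENNReal.ofReal (|ψ x|)
        = ENNReal.ofReal ZN * ENNReal.ofReal (|ψ x * L x|) := by
      intro x
      rw [hAofReal, ← ENNReal.ofReal_mul (hprodpos x).le, ← ENNReal.ofReal_mul hZNpos.le]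
      congr 1
      rw [abs_mul, hL x, abs_of_pos (div_pos (hprodpos x) hZNpos)]
      field_simp
    have hm1 : Measurable fun x => ENNReal.ofReal (|ψ x * L x|) :=
      ENNReal.measurable_ofReal.comp (hψmeas.mul hLmeas).abs
    rw [lintegral_congr heq, lintegral_const_mul _ hm1]
    refine ENNReal.mul_lt_top ENNReal.ofReal_lt_top ?_
    have hfin := hψLint.2
    rw [hasFiniteIntegral_iff_norm] at hfin
    simpa [Real.norm_eq_abs, abs_mul] using hfin
  have hIple : (∫⁻ x, (∏ n ∈ Finset.Ioc 0 N, ENNReal.ofReal (α n x)) *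
      ENNReal.ofReal (ψ x) ∂Q) < ⊤ :=
    lt_of_le_of_lt (lintegral_mono fun x =>
      mul_le_mul_right (ENNReal.ofReal_le_ofReal (le_abs_self _)) _) hintabs
  have hImle : (∫⁻ x, (∏ n ∈ Finset.Ioc 0 N, ENNReal.ofReal (α n x)) *
      ENNReal.ofReal (-ψ x) ∂Q) < ⊤ :=
    lt_of_le_of_lt (lintegral_mono fun x =>
      mul_le_mul_right (ENNReal.ofReal_le_ofReal (neg_le_abs _)) _) hintabs
  have hMp := MAIN (fun x => ENNReal.ofReal (ψ x)) (ENNReal.measurable_ofReal.comp hψmeas)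
  have hMm := MAIN (fun x => ENNReal.ofReal (-ψ x)) (ENNReal.measurable_ofReal.comp hψmeas.neg)
  -- the positive and negative parts of the estimator
  set ρp : Ω → ℝ := fun ω => (∏ t ∈ Finset.Icc 1 r, vbar t ω) *
    ((M:ℝ)⁻¹ * ∑ i, v (r+1) i ω * max (ψ (X (r+1) i ω)) 0) with hρpdef
  set ρm : Ω → ℝ := fun ω => (∏ t ∈ Finset.Icc 1 r, vbar t ω) *
    ((M:ℝ)⁻¹ * ∑ i, v (r+1) i ω * max (-ψ (X (r+1) i ω)) 0) with hρmdef
  have hXr1 : ∀ i : Fin M, Measurable (X (r+1) i) := fun i => hXm (r+1) (by omega) le_rfl i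
  have hWrmeas : Measurable (fun ω => ∏ t ∈ Finset.Icc 1 r, vbar t ω) :=
    Finset.measurable_prod _ fun t ht =>
      hvbarm t (Finset.mem_Icc.mp ht).1 (by have := (Finset.mem_Icc.mp ht).2; omega)
  have hWrnonneg : ∀ ω, 0 ≤ ∏ t ∈ Finset.Icc 1 r, vbar t ω :=
    fun ω => Finset.prod_nonneg fun t ht =>
      (hvbarpos t (Finset.mem_Icc.mp ht).1
        (by have := (Finset.mem_Icc.mp ht).2; omega) ω).le
  have hρpmeas : Measurable ρp := by
    rw [hρpdef]
    exact hWrmeas.mul (measurable_const.mul (Finset.measurable_sum _ fun i _ =>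
      (hvm (r+1) (by omega) le_rfl i).mul
        ((hψmeas.comp (hXr1 i)).max measurable_const)))
  have hρmmeas : Measurable ρm := by
    rw [hρmdef]
    exact hWrmeas.mul (measurable_const.mul (Finset.measurable_sum _ fun i _ =>
      (hvm (r+1) (by omega) le_rfl i).mul
        (((hψmeas.comp (hXr1 i)).neg).max measurable_const)))
  have hρp0 : ∀ ω, 0 ≤ ρp ω := by
    intro ω
    rw [hρpdef]
    refine mul_nonneg (hWrnonneg ω) (mul_nonneg (by positivity) ?_)
    exact Finset.sum_nonneg fun i _ =>
      mul_nonneg (hvpos (r+1) (by omega) le_rfl i ω).le (le_max_right _ _)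
  have hρm0 : ∀ ω, 0 ≤ ρm ω := by
    intro ω
    rw [hρmdef]
    refine mul_nonneg (hWrnonneg ω) (mul_nonneg (by positivity) ?_)
    exact Finset.sum_nonneg fun i _ =>
      mul_nonneg (hvpos (r+1) (by omega) le_rfl i ω).le (le_max_right _ _)
  -- their lintegrals
  have hptp : ∀ ω, ENNReal.ofReal (ρp ω)
      = (∏ t ∈ Finset.Icc 1 r, ENNReal.ofReal (vbar t ω)) *
        ((M:ℝ≥0∞)⁻¹ * ∑ i, ENNReal.ofReal (v (r+1) i ω) *
          ENNReal.ofReal (ψ (X (r+1) i ω))) := by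
    intro ω
    show ENNReal.ofReal ((∏ t ∈ Finset.Icc 1 r, vbar t ω) *
      ((M:ℝ)⁻¹ * ∑ i, v (r+1) i ω * max (ψ (X (r+1) i ω)) 0)) = _
    rw [ENNReal.ofReal_mul (hWrnonneg ω),
      ENNReal.ofReal_prod_of_nonneg (fun t ht =>
        (hvbarpos t (Finset.mem_Icc.mp ht).1
          (by have := (Finset.mem_Icc.mp ht).2; omega) ω).le),
      ENNReal.ofReal_mul (by positivity : (0:ℝ) ≤ (M:ℝ)⁻¹),
      ENNReal.ofReal_inv_of_pos hMR, ENNReal.ofReal_natCast,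
      ENNReal.ofReal_sum_of_nonneg (fun i _ =>
        mul_nonneg (hvpos (r+1) (by omega) le_rfl i ω).le (le_max_right _ _))]
    congr 1
    congr 1
    refine Finset.sum_congr rfl fun i _ => ?_
    rw [ENNReal.ofReal_mul (hvpos (r+1) (by omega) le_rfl i ω).le, hofRealmax]
  have hptm : ∀ ω, ENNReal.ofReal (ρm ω)
      = (∏ t ∈ Finset.Icc 1 r, ENNReal.ofReal (vbar t ω)) *
        ((M:ℝ≥0∞)⁻¹ * ∑ i, ENNReal.ofReal (v (r+1) i ω) *
          ENNReal.ofReal (-ψ (X (r+1) i ω))) := by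
    intro ω
    show ENNReal.ofReal ((∏ t ∈ Finset.Icc 1 r, vbar t ω) *
      ((M:ℝ)⁻¹ * ∑ i, v (r+1) i ω * max (-ψ (X (r+1) i ω)) 0)) = _
    rw [ENNReal.ofReal_mul (hWrnonneg ω),
      ENNReal.ofReal_prod_of_nonneg (fun t ht =>
        (hvbarpos t (Finset.mem_Icc.mp ht).1
          (by have := (Finset.mem_Icc.mp ht).2; omega) ω).le),
      ENNReal.ofReal_mul (by positivity : (0:ℝ) ≤ (M:ℝ)⁻¹),
      ENNReal.ofReal_inv_of_pos hMR, ENNReal.ofReal_natCast,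
      ENNReal.ofReal_sum_of_nonneg (fun i _ =>
        mul_nonneg (hvpos (r+1) (by omega) le_rfl i ω).le (le_max_right _ _))]
    congr 1
    congr 1
    refine Finset.sum_congr rfl fun i _ => ?_
    rw [ENNReal.ofReal_mul (hvpos (r+1) (by omega) le_rfl i ω).le, hofRealmax]
  have hρplint : ∫⁻ ω, ENNReal.ofReal (ρp ω) ∂P
      = ∫⁻ x, (∏ n ∈ Finset.Ioc 0 N, ENNReal.ofReal (α n x)) * ENNReal.ofReal (ψ x) ∂Q := by
    rw [lintegral_congr hptp]
    exact hMp
  have hρmlint : ∫⁻ ω, ENNReal.ofReal (ρm ω) ∂P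
      = ∫⁻ x, (∏ n ∈ Finset.Ioc 0 N, ENNReal.ofReal (α n x)) * ENNReal.ofReal (-ψ x) ∂Q := by
    rw [lintegral_congr hptm]
    exact hMm
  -- integrability
  have hρpint : Integrable ρp P := by
    refine ⟨hρpmeas.aestronglyMeasurable, ?_⟩
    rw [hasFiniteIntegral_iff_ofReal (Filter.Eventually.of_forall hρp0), hρplint]
    exact hIple
  have hρmint : Integrable ρm P := by
    refine ⟨hρmmeas.aestronglyMeasurable, ?_⟩
    rw [hasFiniteIntegral_iff_ofReal (Filter.Eventually.of_forall hρm0), hρmlint]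
    exact hImle
  have hρpeq : ∫ ω, ρp ω ∂P = (∫⁻ x, (∏ n ∈ Finset.Ioc 0 N, ENNReal.ofReal (α n x)) *
      ENNReal.ofReal (ψ x) ∂Q).toReal := by
    rw [integral_eq_lintegral_of_nonneg_ae (Filter.Eventually.of_forall hρp0)
      hρpmeas.aestronglyMeasurable, hρplint]
  have hρmeq : ∫ ω, ρm ω ∂P = (∫⁻ x, (∏ n ∈ Finset.Ioc 0 N, ENNReal.ofReal (α n x)) *
      ENNReal.ofReal (-ψ x) ∂Q).toReal := by
    rw [integral_eq_lintegral_of_nonneg_ae (Filter.Eventually.of_forall hρm0)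
      hρmmeas.aestronglyMeasurable, hρmlint]
  -- pointwise identity for the estimator
  have hZNMψ : ∀ ω, ZNM ω * ψhat ω = ρp ω - ρm ω := by
    intro ω
    rw [hZNM ω, hψhat ω, Finset.prod_Icc_succ_top (by omega : 1 ≤ r + 1)]
    have hb : vbar (r+1) ω ≠ 0 := (hvbarpos (r+1) (by omega) le_rfl ω).ne'
    have hM' : (M:ℝ) ≠ 0 := ne_of_gt hMR
    have h1 : vbar (r+1) ω * ∑ i, V (r+1) i ω * ψ (X (r+1) i ω)
        = (M:ℝ)⁻¹ * ∑ i, v (r+1) i ω * ψ (X (r+1) i ω) := by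
      rw [Finset.mul_sum, Finset.mul_sum]
      refine Finset.sum_congr rfl fun i _ => ?_
      rw [hV (r+1) (by omega) le_rfl i ω]
      field_simp
    rw [mul_assoc, h1, hρpdef, hρmdef]
    have h2 : ∀ i : Fin M, v (r+1) i ω * ψ (X (r+1) i ω)
        = v (r+1) i ω * max (ψ (X (r+1) i ω)) 0
          - v (r+1) i ω * max (-ψ (X (r+1) i ω)) 0 := by
      intro i
      rw [← mul_sub, hsplitψ]
    rw [Finset.sum_congr rfl (fun i _ => h2 i), Finset.sum_sub_distrib]
    ring
  -- the Q-side computation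
  have hint0 : Integrable (fun x => ψ x * (∏ n ∈ Finset.Icc 1 N, α n x)) Q := by
    have he : (fun x => ψ x * ∏ n ∈ Finset.Icc 1 N, α n x) = fun x => ZN * (ψ x * L x) :=
      funext hψprod
    rw [he]
    exact hψLint.const_mul ZN
  have hintp : Integrable (fun x => max (ψ x) 0 * (∏ n ∈ Finset.Icc 1 N, α n x)) Q := by
    refine hint0.mono (((hψmeas.max measurable_const).mul
      hprodmeas).aestronglyMeasurable) (Filter.Eventually.of_forall fun x => ?_)
    rw [Real.norm_eq_abs, Real.norm_eq_abs, abs_mul, abs_mul]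
    refine mul_le_mul_of_nonneg_right ?_ (abs_nonneg _)
    rw [abs_of_nonneg (le_max_right _ _)]
    exact max_le (le_abs_self _) (abs_nonneg _)
  have hintm : Integrable (fun x => max (-ψ x) 0 * (∏ n ∈ Finset.Icc 1 N, α n x)) Q := by
    refine hint0.mono ((((hψmeas.neg).max measurable_const).mul
      hprodmeas).aestronglyMeasurable) (Filter.Eventually.of_forall fun x => ?_)
    rw [Real.norm_eq_abs, Real.norm_eq_abs, abs_mul, abs_mul]
    refine mul_le_mul_of_nonneg_right ?_ (abs_nonneg _)
    rw [abs_of_nonneg (le_max_right _ _)]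
    exact max_le (neg_le_abs _) (abs_nonneg _)
  have hps : ∫ x, max (ψ x) 0 * (∏ n ∈ Finset.Icc 1 N, α n x) ∂Q
      = (∫⁻ x, (∏ n ∈ Finset.Ioc 0 N, ENNReal.ofReal (α n x)) *
          ENNReal.ofReal (ψ x) ∂Q).toReal := by
    rw [integral_eq_lintegral_of_nonneg_ae (Filter.Eventually.of_forall fun x =>
      mul_nonneg (le_max_right _ _) (hprodpos x).le)
      (((hψmeas.max measurable_const).mul hprodmeas).aestronglyMeasurable)]
    congr 1
    refine lintegral_congr fun x => ?_
    rw [ENNReal.ofReal_mul (le_max_right _ _), hofRealmax, hAofReal, mul_comm]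
  have hms : ∫ x, max (-ψ x) 0 * (∏ n ∈ Finset.Icc 1 N, α n x) ∂Q
      = (∫⁻ x, (∏ n ∈ Finset.Ioc 0 N, ENNReal.ofReal (α n x)) *
          ENNReal.ofReal (-ψ x) ∂Q).toReal := by
    rw [integral_eq_lintegral_of_nonneg_ae (f := fun x => max (-ψ x) 0 * (∏ n ∈ Finset.Icc 1 N, α n x))
      (Filter.Eventually.of_forall fun x =>
      mul_nonneg (le_max_right _ _) (hprodpos x).le)
      ((((hψmeas.neg).max measurable_const).mul hprodmeas).aestronglyMeasurable)]
    congr 1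
    refine lintegral_congr fun x => ?_
    rw [ENNReal.ofReal_mul (le_max_right _ _), hofRealmax, hAofReal, mul_comm]
  -- put everything together
  calc ∫ ω, ZNM ω * ψhat ω ∂P
      = ∫ ω, (ρp ω - ρm ω) ∂P :=
        integral_congr_ae (Filter.Eventually.of_forall fun ω => hZNMψ ω)
    _ = (∫ ω, ρp ω ∂P) - ∫ ω, ρm ω ∂P := integral_sub hρpint hρmint
    _ = (∫⁻ x, (∏ n ∈ Finset.Ioc 0 N, ENNReal.ofReal (α n x)) *
          ENNReal.ofReal (ψ x) ∂Q).toReal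
        - (∫⁻ x, (∏ n ∈ Finset.Ioc 0 N, ENNReal.ofReal (α n x)) *
          ENNReal.ofReal (-ψ x) ∂Q).toReal := by rw [hρpeq, hρmeq]
    _ = (∫ x, max (ψ x) 0 * (∏ n ∈ Finset.Icc 1 N, α n x) ∂Q)
        - ∫ x, max (-ψ x) 0 * (∏ n ∈ Finset.Icc 1 N, α n x) ∂Q := by rw [hps, hms]
    _ = ∫ x, (max (ψ x) 0 * (∏ n ∈ Finset.Icc 1 N, α n x)
        - max (-ψ x) 0 * (∏ n ∈ Finset.Icc 1 N, α n x)) ∂Q :=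
        (integral_sub hintp hintm).symm
    _ = ∫ x, ψ x * (∏ n ∈ Finset.Icc 1 N, α n x) ∂Q := by
        refine integral_congr_ae (Filter.Eventually.of_forall fun x => ?_)
        show max (ψ x) 0 * (∏ n ∈ Finset.Icc 1 N, α n x)
          - max (-ψ x) 0 * (∏ n ∈ Finset.Icc 1 N, α n x)
          = ψ x * (∏ n ∈ Finset.Icc 1 N, α n x)
        rw [← sub_mul, hsplitψ]
    _ = ∫ x, ZN * (ψ x * L x) ∂Q :=
        integral_congr_ae (Filter.Eventually.of_forall fun x => hψprod x)
    _ = ZN * ∫ x, ψ x * L x ∂Q := integral_const_mul ZN _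
    _ = ZN * ψN := by rw [hψN]
end
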